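/- arXiv:2404.16694 — 8 statements merged into one kernel-verified Lean document; each statement's English description precedes it below -/
import Mathlib

section
/- Let r ≥ 1 be an integer, a ∈ ℝ, h > 0, and consider the uniform nodes x_k = a + k·h. Let f : ℝ → ℝ, fix an index i, and set x_{i-1/2} = a + (i − 1/2)·h. Let p_0^{2r-1} be the Lagrange interpolant of f on the 2r nodes {x_{i-r}, …, x_{i+r-1}}, and for each k = 0, …, r−1 let p_k^r be the Lagrange interpolant of f on the r+1 nodes {x_{i-r+k}, …, x_{i+k}}. Then p_0^{2r-1}(x_{i-1/2}) = Σ_{k=0}^{r-1} C_k^r · p_k^r(x_{i-1/2}), where C_k^r = (1/2^{2r-1})·binom(2r, 2k+1). -/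
/-!
Both sides are linear in the values `f (x (i - r + u))`, `u < 2r`, so it suffices to compare the
weight of each node. After rescaling, the nodes become `0, …, n - 1` and the evaluation point a
half-integer `c`, where the Lagrange weight of node `u` has the closed form
`(-1)^(n-1-u) * (n-1).choose u / (n-1)! * ∏ s < n, (c - s) / (c - u)`, and the products of
half-integers are Pochhammer symbols `(1/2)_m`. On every small stencil `k` containing node `u`,
`c - (u - k)` is the same as on the large one, and the weight of `u`, multiplied by `C_k^r`,
turns out to be `(r-1).choose k * r.choose (u-k)` times a factor independent of `k`. Vandermonde's
identity then sums these to `(2r-1).choose u` times that factor, which is the weight of `u` on the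
large stencil.
-/

/-- Value at `y` of the Lagrange interpolant of `f` on the nodes `{x k : k ∈ s}`. -/
noncomputable def lagEval (s : Finset ℤ) (x : ℤ → ℝ) (f : ℝ → ℝ) (y : ℝ) : ℝ :=
  ∑ k ∈ s, f (x k) * ∏ m ∈ s.erase k, (y - x m) / (x k - x m)

open Finset Polynomial
open scoped Nat

theorem prod_range_erase_natCast_sub {R : Type*} [CommRing R] {n u : ℕ} (hu : u < n) :
    ∏ s ∈ (range n).erase u, ((u : R) - s) = (-1) ^ (n - 1 - u) * u ! * (n - 1 - u)! := by
  obtain ⟨m, rfl⟩ : ∃ m, n = u + 1 + m := ⟨n - 1 - u, by omega⟩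
  have hsplit : (range (u + 1 + m)).erase u =
      range u ∪ (range m).map (addLeftEmbedding (u + 1)) := by
    ext s
    simp only [mem_erase, mem_range, mem_union, mem_map, addLeftEmbedding_apply]
    constructor
    · intro hs
      by_cases hsu : s < u
      · exact Or.inl hsu
      · exact Or.inr ⟨s - (u + 1), by omega, by omega⟩
    · rintro (hs | ⟨j, hj, rfl⟩) <;> omega
  have hdisj : Disjoint (range u) ((range m).map (addLeftEmbedding (u + 1))) := by
    rw [disjoint_left]
    simp only [mem_range, mem_map, addLeftEmbedding_apply]
    rintro s hs ⟨j, -, rfl⟩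
    omega
  have hlow : ∏ s ∈ range u, ((u : R) - s) = u ! := by
    rw [← descPochhammer_eval_eq_prod_range, descPochhammer_eval_eq_descFactorial,
      Nat.descFactorial_self]
  have hhigh :
      ∏ j ∈ range m, ((u : R) - (addLeftEmbedding (u + 1) j : ℕ)) = (-1) ^ m * m ! := by
    have hterm : ∀ j ∈ range m,
        ((u : R) - (addLeftEmbedding (u + 1) j : ℕ)) = -1 * ((j + 1 : ℕ) : R) := by
      intro j _
      simp only [addLeftEmbedding_apply]
      push_cast
      ring
    rw [prod_congr rfl hterm, prod_mul_distrib, prod_const, card_range, ← Nat.cast_prod,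
      prod_range_add_one_eq_factorial]
  rw [hsplit, prod_union hdisj, prod_map, hlow, hhigh, show u + 1 + m - 1 - u = m by omega]
  ring

theorem sum_filter_add_eq_choose (m n u : ℕ) :
    ∑ p ∈ range (m + 1) ×ˢ range (n + 1) with p.1 + p.2 = u, m.choose p.1 * n.choose p.2 =
      (m + n).choose u := by
  rw [Nat.add_choose_eq]
  refine sum_subset (fun p hp => ?_) (fun p hp hp' => ?_)
  · exact HasAntidiagonal.mem_antidiagonal.2 (mem_filter.1 hp).2
  · rw [HasAntidiagonal.mem_antidiagonal] at hp
    simp only [mem_filter, mem_product, mem_range, hp, and_true, not_and, not_lt] at hp'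
    rcases Nat.lt_or_ge m p.1 with h | h
    · rw [Nat.choose_eq_zero_of_lt h, zero_mul]
    · rw [Nat.choose_eq_zero_of_lt (by omega : n < p.2), mul_zero]

section LagrangeWeights

variable {K : Type*} [Field K] [CharZero K]

theorem ascPochhammer_eval_half (n : ℕ) :
    (ascPochhammer K n).eval (1 / 2) = (2 * n)! / (4 ^ n * n !) := by
  induction n with
  | zero => simp
  | succ n ih =>
    rw [ascPochhammer_succ_eval, ih, show 2 * (n + 1) = 2 * n + 1 + 1 by ring]
    push_cast [Nat.factorial_succ]
    field_simp
    ring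

theorem descPochhammer_eval_sub_half (p q : ℕ) :
    (descPochhammer K (p + q)).eval ((p : K) - 1 / 2) =
      (-1) ^ q * (ascPochhammer K p).eval (1 / 2) * (ascPochhammer K q).eval (1 / 2) := by
  have hneg : (ascPochhammer K q).eval (1 / 2) =
      (-1) ^ q * (descPochhammer K q).eval (-(1 / 2)) := by
    rw [← ascPochhammer_eval_neg_eq_descPochhammer, neg_neg]
  rw [← descPochhammer_mul, eval_mul, eval_comp, descPochhammer_eval_eq_ascPochhammer, hneg]
  simp only [eval_sub, eval_X, eval_natCast, sub_sub_cancel_left]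
  rw [mul_mul_mul_comm, ← mul_pow, neg_one_mul, neg_neg, one_pow, one_mul,
    show -(1 / 2 : K) + 1 = 1 / 2 by ring]

theorem choose_mul_ascPochhammer_half {r k : ℕ} (hk : k < r) :
    ((2 * r).choose (2 * k + 1) : K) / 2 ^ (2 * r - 1) * (ascPochhammer K (r - k)).eval (1 / 2) *
        (ascPochhammer K (k + 1)).eval (1 / 2) / r ! =
      (r - 1).choose k * (ascPochhammer K r).eval (1 / 2) ^ 2 / (2 * r - 1)! := by
  obtain ⟨m, rfl⟩ : ∃ m, r = k + m + 1 := ⟨r - k - 1, by omega⟩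
  rw [show k + m + 1 - k = m + 1 by omega, show k + m + 1 - 1 = k + m by omega,
    show 2 * (k + m + 1) - 1 = 2 * (k + m) + 1 by omega,
    Nat.cast_choose K (by omega : 2 * k + 1 ≤ 2 * (k + m + 1)),
    show 2 * (k + m + 1) - (2 * k + 1) = 2 * m + 1 by omega,
    Nat.cast_choose K (Nat.le_add_right k m), Nat.add_sub_cancel_left,
    ascPochhammer_eval_half, ascPochhammer_eval_half, ascPochhammer_eval_half,
    show 2 * (k + m + 1) = 2 * (k + m) + 1 + 1 by ring, show 2 * (m + 1) = 2 * m + 1 + 1 by ring,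
    show 2 * (k + 1) = 2 * k + 1 + 1 by ring, Nat.factorial_succ (2 * (k + m) + 1),
    Nat.factorial_succ (2 * m + 1), Nat.factorial_succ (2 * k + 1), Nat.factorial_succ m,
    Nat.factorial_succ k, show k + m + 1 = (k + m) + 1 by ring, Nat.factorial_succ (k + m),
    show (2 : K) ^ (2 * (k + m) + 1) = 2 * 4 ^ (k + m) by rw [pow_succ, pow_mul]; norm_num; ring]
  have hk : (k : K) + 1 ≠ 0 := Nat.cast_add_one_ne_zero k
  have hm : (m : K) + 1 ≠ 0 := Nat.cast_add_one_ne_zero m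
  have hkm : (k : K) + m + 1 ≠ 0 := by exact_mod_cast Nat.succ_ne_zero (k + m)
  have hfac : ∀ j : ℕ, (j ! : K) ≠ 0 := fun j => Nat.cast_ne_zero.2 j.factorial_ne_zero
  push_cast
  field_simp [hfac]
  ring

def lagWeight (n u : ℕ) (c : K) : K :=
  ∏ s ∈ (range n).erase u, (c - s) / (u - s)

theorem lagWeight_eq {n u : ℕ} {c : K} (hu : u < n) (hc : c - u ≠ 0) :
    lagWeight n u c = (-1) ^ (n - 1 - u) * (n - 1).choose u / (n - 1)! *
      (descPochhammer K n).eval c / (c - u) := by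
  rw [lagWeight, prod_div_distrib, prod_range_erase_natCast_sub hu,
    descPochhammer_eval_eq_prod_range, ← mul_prod_erase (range n) _ (mem_range.2 hu),
    Nat.cast_choose K (by omega : u ≤ n - 1)]
  have hsq : ((-1 : K) ^ (n - 1 - u)) ^ 2 = 1 := by rw [← pow_mul, mul_comm, pow_mul]; simp
  have hfac : ∀ j : ℕ, (j ! : K) ≠ 0 := fun j => Nat.cast_ne_zero.2 j.factorial_ne_zero
  field_simp [hfac]
  linear_combination (-∏ s ∈ (range n).erase u, (c - s)) * hsq

theorem natCast_sub_half_sub_natCast_ne_zero (n m : ℕ) : (n : K) - 1 / 2 - m ≠ 0 := by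
  intro h
  have : ((2 * n : ℕ) : K) = ((2 * m + 1 : ℕ) : K) := by push_cast; linear_combination 2 * h
  have := Nat.cast_injective this
  omega

theorem choose_div_mul_lagWeight {r k v : ℕ} (hk : k < r) (hv : v < r + 1) :
    ((2 * r).choose (2 * k + 1) : K) / 2 ^ (2 * r - 1) * lagWeight (r + 1) v ((r : K) - k - 1 / 2) =
      (-1) ^ (2 * r - 1 - (k + v)) * (-1) ^ r * (ascPochhammer K r).eval (1 / 2) ^ 2 /
        (2 * r - 1)! / ((r : K) - 1 / 2 - (k + v : ℕ)) *
          ((r - 1).choose k * r.choose v : ℕ) := by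
  have hw : (r : K) - k - 1 / 2 - v = (r : K) - 1 / 2 - (k + v : ℕ) := by push_cast; ring
  have hP : (descPochhammer K (r + 1)).eval ((r : K) - k - 1 / 2) =
      (-1) ^ (k + 1) * (ascPochhammer K (r - k)).eval (1 / 2) *
        (ascPochhammer K (k + 1)).eval (1 / 2) := by
    rw [show r + 1 = (r - k) + (k + 1) by omega,
      show (r : K) - k - 1 / 2 = ((r - k : ℕ) : K) - 1 / 2 by
        push_cast [Nat.cast_sub hk.le]; ring]
    exact descPochhammer_eval_sub_half _ _
  have hsign : (-1 : K) ^ (r - v) * (-1) ^ (k + 1) = (-1) ^ (2 * r - 1 - (k + v)) * (-1) ^ r := by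
    rw [← pow_add, ← pow_add, neg_one_pow_eq_pow_mod_two,
      neg_one_pow_eq_pow_mod_two (n := 2 * r - 1 - (k + v) + r)]
    congr 1
    omega
  rw [lagWeight_eq hv (by rw [hw]; exact natCast_sub_half_sub_natCast_ne_zero _ _), hw,
    Nat.add_sub_cancel, hP, Nat.cast_mul]
  linear_combination
    ((r.choose v : K) / ((r : K) - 1 / 2 - (k + v : ℕ)) * (-1) ^ (r - v) * (-1) ^ (k + 1)) *
      choose_mul_ascPochhammer_half (K := K) hk +
    ((r.choose v : K) / ((r : K) - 1 / 2 - (k + v : ℕ)) * (r - 1).choose k *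
      (ascPochhammer K r).eval (1 / 2) ^ 2 / (2 * r - 1)!) * hsign

theorem lagWeight_sub_half_eq_sum {r u : ℕ} (hr : 1 ≤ r) (hu : u < 2 * r) :
    lagWeight (2 * r) u ((r : K) - 1 / 2) =
      ∑ p ∈ range r ×ˢ range (r + 1) with p.1 + p.2 = u,
        ((2 * r).choose (2 * p.1 + 1) : K) / 2 ^ (2 * r - 1) *
          lagWeight (r + 1) p.2 ((r : K) - p.1 - 1 / 2) := by
  have hterm : ∀ p ∈ (range r ×ˢ range (r + 1)).filter (fun p => p.1 + p.2 = u),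
      ((2 * r).choose (2 * p.1 + 1) : K) / 2 ^ (2 * r - 1) *
          lagWeight (r + 1) p.2 ((r : K) - p.1 - 1 / 2) =
        (-1) ^ (2 * r - 1 - u) * (-1) ^ r * (ascPochhammer K r).eval (1 / 2) ^ 2 /
          (2 * r - 1)! / ((r : K) - 1 / 2 - u) * ((r - 1).choose p.1 * r.choose p.2 : ℕ) := by
    rintro ⟨k, v⟩ hp
    simp only [mem_filter, mem_product, mem_range] at hp
    obtain ⟨⟨hk, hv⟩, rfl⟩ := hp
    exact choose_div_mul_lagWeight hk hv
  have hvandermonde := sum_filter_add_eq_choose (r - 1) r u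
  rw [Nat.sub_add_cancel hr, show r - 1 + r = 2 * r - 1 by omega] at hvandermonde
  rw [sum_congr rfl hterm, ← mul_sum, ← Nat.cast_sum, hvandermonde,
    lagWeight_eq hu (natCast_sub_half_sub_natCast_ne_zero _ _), two_mul,
    descPochhammer_eval_sub_half, ← two_mul]
  ring

end LagrangeWeights

theorem lagEval_Icc_eq_sum_lagWeight {x : ℤ → ℝ} {a h : ℝ}
    (hx : ∀ m : ℤ, x m = a + m * h) (hh : h ≠ 0) (f : ℝ → ℝ) (b : ℤ) (n : ℕ)
    {y c : ℝ} (hy : y = x b + c * h) :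
    lagEval (Icc b (b + n - 1)) x f y = ∑ u ∈ range n, f (x (b + u)) * lagWeight n u c := by
  let e : ℕ ↪ ℤ := Nat.castEmbedding.trans (addLeftEmbedding b)
  have he : ∀ s : ℕ, e s = b + s := fun _ => rfl
  have hmap : (range n).map e = Icc b (b + n - 1) := by
    ext m
    simp only [mem_map, mem_range, mem_Icc, he]
    constructor
    · rintro ⟨s, hs, rfl⟩
      omega
    · intro hm
      exact ⟨(m - b).toNat, by omega, by omega⟩
  rw [lagEval, ← hmap, sum_map]
  refine sum_congr rfl fun u hu => ?_
  rw [← map_erase, prod_map, lagWeight]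
  congr 1
  refine prod_congr rfl fun s _ => ?_
  rw [he, he, hy, hx, hx, hx]
  push_cast
  rw [show a + b * h + c * h - (a + (b + s) * h) = (c - s) * h by ring,
    show a + (b + u) * h - (a + (b + s) * h) = (u - s) * h by ring, mul_div_mul_right _ _ hh]

theorem stmt2 (r : ℕ) (hr : 1 ≤ r) (a h : ℝ) (hh : 0 < h) (f : ℝ → ℝ) (i : ℤ)
    (x : ℤ → ℝ) (hx : ∀ m : ℤ, x m = a + (m : ℝ) * h)
    (xh : ℝ) (hxh : xh = a + ((i : ℝ) - 1 / 2) * h) :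
    lagEval (Finset.Icc (i - r) (i + r - 1)) x f xh =
      ∑ k ∈ Finset.range r,
        ((Nat.choose (2 * r) (2 * k + 1) : ℝ) / 2 ^ (2 * r - 1)) *
          lagEval (Finset.Icc (i - r + k) (i + k)) x f xh := by
  have hxh' : ∀ k : ℕ, xh = x (i - r + k) + ((r : ℝ) - k - 1 / 2) * h := fun k => by
    rw [hx, hxh]
    push_cast
    ring
  have hsmall : ∀ k : ℕ, lagEval (Icc (i - r + k) (i + k)) x f xh =
      ∑ v ∈ range (r + 1),
        f (x (i - r + (k + v : ℕ))) * lagWeight (r + 1) v ((r : ℝ) - k - 1 / 2) := by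
    intro k
    rw [show i + k = i - r + k + (r + 1 : ℕ) - 1 by push_cast; ring,
      lagEval_Icc_eq_sum_lagWeight hx hh.ne' f _ _ (hxh' k)]
    simp only [Nat.cast_add, add_assoc]
  rw [show i + r - 1 = i - r + (2 * r : ℕ) - 1 by push_cast; ring,
    lagEval_Icc_eq_sum_lagWeight hx hh.ne' f _ _ (c := (r : ℝ) - 1 / 2) (by simpa using hxh' 0)]
  simp only [hsmall, mul_sum]
  rw [← sum_product' (range r) (range (r + 1)),
    ← sum_fiberwise_of_maps_to (g := fun p : ℕ × ℕ => p.1 + p.2) (t := range (2 * r))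
      (fun p hp => by simp only [mem_product, mem_range] at hp ⊢; omega)]
  refine sum_congr rfl fun u hu => ?_
  rw [lagWeight_sub_half_eq_sum hr (mem_range.1 hu), mul_sum]
  refine sum_congr rfl fun p hp => ?_
  rw [(mem_filter.1 hp).2]
  ring
end

section
/- Fix an integer r ≥ 2, a real t > 0, and h₀ ∈ (0,1]. Let C_0, C_1 : (0,h₀] → [0,1] satisfy C_0(h) + C_1(h) = 1 for all h, and let I_0, I_1 : (0,h₀] → [0,∞). Define α_i(h) = C_i(h)/(h² + I_i(h))^t and ω_i(h) = α_i(h)/(α_0(h) + α_1(h)) for i = 0,1. Suppose there is A > 0 such that for all h ∈ (0,h₀]: I_0(h) ≤ A·h², I_1(h) ≤ A·h², and |I_0(h) − I_1(h)| ≤ A·h^{r+1}. Then there is B > 0 such that for all h ∈ (0,h₀] and i = 0,1: |ω_i(h) − C_i(h)| ≤ B·h^{r-1}. -/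
/-!
With `dᵢ = (h ^ 2 + Iᵢ) ^ t` one has `ω₀ - C₀ = C₀ C₁ (d₁ - d₀) / (C₀ d₁ + C₁ d₀)`, so
`|ω₀ - C₀| ≤ |d₁ - d₀| / min d₀ d₁`. The weights do not change when both arguments
`h ^ 2 + Iᵢ` are divided by `h ^ 2`; after this rescaling they lie in `[1, 1 + A]` and differ
by at most `A h ^ (r - 1)`, and the mean value theorem for `z ↦ z ^ t` on `[1, 1 + A]` gives
the bound.
-/

open Real Set

noncomputable def wenoWeight (t c0 c1 x y : ℝ) : ℝ :=
  c0 / x ^ t / (c0 / x ^ t + c1 / y ^ t)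

lemma abs_rpow_sub_rpow_le {a b x y t : ℝ} (ha : 0 < a) (hx : x ∈ Icc a b) (hy : y ∈ Icc a b) :
    |y ^ t - x ^ t| ≤ |t| * max (a ^ (t - 1)) (b ^ (t - 1)) * |y - x| := by
  refine (convex_Icc a b).norm_image_sub_le_of_norm_hasDerivWithin_le (f := fun z ↦ z ^ t)
    (fun z hz ↦ (hasDerivAt_rpow_const (Or.inl (ha.trans_le hz.1).ne')).hasDerivWithinAt)
    (fun z hz ↦ ?_) hx hy
  have hz0 : 0 < z := ha.trans_le hz.1
  rw [norm_mul, Real.norm_eq_abs, Real.norm_eq_abs, abs_of_pos (rpow_pos_of_pos hz0 _)]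
  refine mul_le_mul_of_nonneg_left ?_ (abs_nonneg t)
  rcases le_total 0 (t - 1) with hexp | hexp
  · exact le_max_of_le_right (rpow_le_rpow hz0.le hz.2 hexp)
  · exact le_max_of_le_left (rpow_le_rpow_of_nonpos ha hz.1 hexp)

lemma wenoWeight_mul_mul {t c0 c1 s x y : ℝ} (hs : 0 < s) (hx : 0 ≤ x) (hy : 0 ≤ y) :
    wenoWeight t c0 c1 (s * x) (s * y) = wenoWeight t c0 c1 x y := by
  simp only [wenoWeight, mul_rpow hs.le hx, mul_rpow hs.le hy, div_mul_eq_div_div_swap, ← add_div]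
  exact div_div_div_cancel_right₀ (rpow_pos_of_pos hs t).ne' _ _

lemma abs_div_div_add_div_sub_le {c0 c1 d0 d1 : ℝ} (hc0 : 0 ≤ c0) (hc1 : 0 ≤ c1)
    (hsum : c0 + c1 = 1) (hd0 : 0 < d0) (hd1 : 0 < d1) :
    |c0 / d0 / (c0 / d0 + c1 / d1) - c0| ≤ |d1 - d0| / min d0 d1 := by
  have hmin : min d0 d1 ≤ c0 * d1 + c1 * d0 := by
    nlinarith [min_le_left d0 d1, min_le_right d0 d1]
  have hden : 0 < c0 * d1 + c1 * d0 := (lt_min hd0 hd1).trans_le hmin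
  have hid : c0 / d0 / (c0 / d0 + c1 / d1) - c0
      = c0 * c1 * (d1 - d0) / (c0 * d1 + c1 * d0) := by
    have hden' : c0 * d1 + d0 * c1 ≠ 0 := by linarith
    rw [div_add_div _ _ hd0.ne' hd1.ne', div_div_div_eq]
    field_simp
    linear_combination (-c0 * d1) * hsum
  rw [hid, abs_div, abs_mul, abs_of_nonneg (mul_nonneg hc0 hc1), abs_of_pos hden]
  have hc : c0 * c1 ≤ 1 := by nlinarith
  exact div_le_div₀ (abs_nonneg _) (mul_le_of_le_one_left (abs_nonneg _) hc) (lt_min hd0 hd1) hmin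

lemma abs_wenoWeight_sub_le_of_one_le {t c0 c1 x y : ℝ} (ht : 0 ≤ t) (hc0 : 0 ≤ c0)
    (hc1 : 0 ≤ c1) (hsum : c0 + c1 = 1) (hx : 1 ≤ x) (hy : 1 ≤ y) :
    |wenoWeight t c0 c1 x y - c0| ≤ |y ^ t - x ^ t| :=
  (abs_div_div_add_div_sub_le hc0 hc1 hsum (rpow_pos_of_pos (by linarith) t)
    (rpow_pos_of_pos (by linarith) t)).trans
    (div_le_self (abs_nonneg _) (le_min (one_le_rpow hx ht) (one_le_rpow hy ht)))

lemma abs_wenoWeight_sub_le {t A h c0 c1 I0 I1 : ℝ} (ht : 0 < t) (hh : 0 < h)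
    (hc0 : 0 ≤ c0) (hc1 : 0 ≤ c1) (hsum : c0 + c1 = 1) (hI0 : 0 ≤ I0) (hI1 : 0 ≤ I1)
    (hI0A : I0 ≤ A * h ^ 2) (hI1A : I1 ≤ A * h ^ 2) :
    |wenoWeight t c0 c1 (h ^ 2 + I0) (h ^ 2 + I1) - c0|
      ≤ t * max 1 ((1 + A) ^ (t - 1)) * (|I1 - I0| / h ^ 2) := by
  have hh2 : 0 < h ^ 2 := by positivity
  have hscale : ∀ I, h ^ 2 + I = h ^ 2 * (1 + I / h ^ 2) := fun I ↦ by field_simp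
  have hmem : ∀ I, 0 ≤ I → I ≤ A * h ^ 2 → 1 + I / h ^ 2 ∈ Icc 1 (1 + A) := fun I hI hIA ↦
    ⟨le_add_of_nonneg_right (by positivity), by grw [hIA, mul_div_cancel_right₀ _ hh2.ne']⟩
  rw [hscale I0, hscale I1, wenoWeight_mul_mul hh2 (by positivity) (by positivity)]
  calc _ ≤ |(1 + I1 / h ^ 2) ^ t - (1 + I0 / h ^ 2) ^ t| :=
        abs_wenoWeight_sub_le_of_one_le ht.le hc0 hc1 hsum (hmem I0 hI0 hI0A).1
          (hmem I1 hI1 hI1A).1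
    _ ≤ |t| * max (1 ^ (t - 1)) ((1 + A) ^ (t - 1)) * |1 + I1 / h ^ 2 - (1 + I0 / h ^ 2)| :=
        abs_rpow_sub_rpow_le one_pos (hmem I0 hI0 hI0A) (hmem I1 hI1 hI1A)
    _ = t * max 1 ((1 + A) ^ (t - 1)) * (|I1 - I0| / h ^ 2) := by
        rw [one_rpow, abs_of_pos ht, add_sub_add_left_eq_sub, ← sub_div, abs_div,
          abs_of_pos hh2]

theorem stmt4_general (r : ℕ) (hr : 2 ≤ r) (t : ℝ) (ht : 0 < t)
    (h₀ : ℝ)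
    (C0 C1 I0 I1 : ℝ → ℝ)
    (hC0 : ∀ h ∈ Set.Ioc (0 : ℝ) h₀, 0 ≤ C0 h ∧ C0 h ≤ 1)
    (hC1 : ∀ h ∈ Set.Ioc (0 : ℝ) h₀, 0 ≤ C1 h ∧ C1 h ≤ 1)
    (hsum : ∀ h ∈ Set.Ioc (0 : ℝ) h₀, C0 h + C1 h = 1)
    (hI0 : ∀ h ∈ Set.Ioc (0 : ℝ) h₀, 0 ≤ I0 h)
    (hI1 : ∀ h ∈ Set.Ioc (0 : ℝ) h₀, 0 ≤ I1 h)
    (A : ℝ) (hA : 0 < A)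
    (hI0A : ∀ h ∈ Set.Ioc (0 : ℝ) h₀, I0 h ≤ A * h ^ 2)
    (hI1A : ∀ h ∈ Set.Ioc (0 : ℝ) h₀, I1 h ≤ A * h ^ 2)
    (hdiff : ∀ h ∈ Set.Ioc (0 : ℝ) h₀, |I0 h - I1 h| ≤ A * h ^ (r + 1)) :
    ∃ B > 0, ∀ h ∈ Set.Ioc (0 : ℝ) h₀,
      |C0 h / (h ^ 2 + I0 h) ^ t /
          (C0 h / (h ^ 2 + I0 h) ^ t + C1 h / (h ^ 2 + I1 h) ^ t) - C0 h|
        ≤ B * h ^ (r - 1) ∧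
      |C1 h / (h ^ 2 + I1 h) ^ t /
          (C0 h / (h ^ 2 + I0 h) ^ t + C1 h / (h ^ 2 + I1 h) ^ t) - C1 h|
        ≤ B * h ^ (r - 1) := by
  set K := t * max 1 ((1 + A) ^ (t - 1))
  have hK : 0 ≤ K := by positivity
  refine ⟨K * A, by positivity, fun h hh ↦ ?_⟩
  have hgap : |I0 h - I1 h| / h ^ 2 ≤ A * h ^ (r - 1) := by
    rw [div_le_iff₀ (pow_pos hh.1 2), mul_assoc, ← pow_add, show r - 1 + 2 = r + 1 by omega]
    exact hdiff h hh
  have hC1' : C1 h + C0 h = 1 := by linarith [hsum h hh]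
  constructor
  · calc _ ≤ K * (|I1 h - I0 h| / h ^ 2) :=
          abs_wenoWeight_sub_le ht hh.1 (hC0 h hh).1 (hC1 h hh).1 (hsum h hh) (hI0 h hh)
            (hI1 h hh) (hI0A h hh) (hI1A h hh)
      _ ≤ K * A * h ^ (r - 1) := by
          rw [abs_sub_comm, mul_assoc K]; exact mul_le_mul_of_nonneg_left hgap hK
  · rw [add_comm (C0 h / _)]
    calc _ ≤ K * (|I0 h - I1 h| / h ^ 2) :=
          abs_wenoWeight_sub_le ht hh.1 (hC1 h hh).1 (hC0 h hh).1 hC1' (hI1 h hh)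
            (hI0 h hh) (hI1A h hh) (hI0A h hh)
      _ ≤ K * A * h ^ (r - 1) := by
          rw [mul_assoc K]; exact mul_le_mul_of_nonneg_left hgap hK

theorem stmt4 (r : ℕ) (hr : 2 ≤ r) (t : ℝ) (ht : 0 < t)
    (h₀ : ℝ) (hh₀ : 0 < h₀) (hh₀1 : h₀ ≤ 1)
    (C0 C1 I0 I1 : ℝ → ℝ)
    (hC0 : ∀ h ∈ Set.Ioc (0 : ℝ) h₀, 0 ≤ C0 h ∧ C0 h ≤ 1)
    (hC1 : ∀ h ∈ Set.Ioc (0 : ℝ) h₀, 0 ≤ C1 h ∧ C1 h ≤ 1)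
    (hsum : ∀ h ∈ Set.Ioc (0 : ℝ) h₀, C0 h + C1 h = 1)
    (hI0 : ∀ h ∈ Set.Ioc (0 : ℝ) h₀, 0 ≤ I0 h)
    (hI1 : ∀ h ∈ Set.Ioc (0 : ℝ) h₀, 0 ≤ I1 h)
    (A : ℝ) (hA : 0 < A)
    (hI0A : ∀ h ∈ Set.Ioc (0 : ℝ) h₀, I0 h ≤ A * h ^ 2)
    (hI1A : ∀ h ∈ Set.Ioc (0 : ℝ) h₀, I1 h ≤ A * h ^ 2)
    (hdiff : ∀ h ∈ Set.Ioc (0 : ℝ) h₀, |I0 h - I1 h| ≤ A * h ^ (r + 1)) :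
    ∃ B > 0, ∀ h ∈ Set.Ioc (0 : ℝ) h₀,
      |C0 h / (h ^ 2 + I0 h) ^ t /
          (C0 h / (h ^ 2 + I0 h) ^ t + C1 h / (h ^ 2 + I1 h) ^ t) - C0 h|
        ≤ B * h ^ (r - 1) ∧
      |C1 h / (h ^ 2 + I1 h) ^ t /
          (C0 h / (h ^ 2 + I0 h) ^ t + C1 h / (h ^ 2 + I1 h) ^ t) - C1 h|
        ≤ B * h ^ (r - 1) :=
  stmt4_general r hr t ht h₀ C0 C1 I0 I1 hC0 hC1 hsum hI0 hI1 A hA hI0A hI1A hdiff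
end

section
/- Fix an integer r ≥ 2, a real t > 0, and h₀ ∈ (0,1]. Let C_0, C_1 : (0,h₀] → [0,1] satisfy C_0(h) + C_1(h) = 1 for all h, and let I_0, I_1 : (0,h₀] → [0,∞). Define α_i(h) = C_i(h)/(h² + I_i(h))^t and ω_i(h) = α_i(h)/(α_0(h) + α_1(h)) for i = 0,1. Suppose there are constants A > 0, c > 0 and c₀ ∈ (0,1] such that for all h ∈ (0,h₀]: I_0(h) ≤ A·h², I_1(h) ≥ c, and C_0(h) ≥ c₀. Then there is B > 0 such that for all h ∈ (0,h₀]: |ω_0(h) − 1| ≤ B·h^{2t} and 0 ≤ ω_1(h) ≤ B·h^{2t}. -/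
theorem stmt5 (r : ℕ) (hr : 2 ≤ r) (t : ℝ) (ht : 0 < t)
    (h₀ : ℝ) (hh₀ : 0 < h₀) (hh₀1 : h₀ ≤ 1)
    (C0 C1 I0 I1 : ℝ → ℝ)
    (hC0 : ∀ h ∈ Set.Ioc (0 : ℝ) h₀, 0 ≤ C0 h ∧ C0 h ≤ 1)
    (hC1 : ∀ h ∈ Set.Ioc (0 : ℝ) h₀, 0 ≤ C1 h ∧ C1 h ≤ 1)
    (hsum : ∀ h ∈ Set.Ioc (0 : ℝ) h₀, C0 h + C1 h = 1)
    (hI0 : ∀ h ∈ Set.Ioc (0 : ℝ) h₀, 0 ≤ I0 h)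
    (hI1 : ∀ h ∈ Set.Ioc (0 : ℝ) h₀, 0 ≤ I1 h)
    (A c c₀ : ℝ) (hA : 0 < A) (hc : 0 < c) (hc₀ : 0 < c₀) (hc₀1 : c₀ ≤ 1)
    (hI0A : ∀ h ∈ Set.Ioc (0 : ℝ) h₀, I0 h ≤ A * h ^ 2)
    (hI1c : ∀ h ∈ Set.Ioc (0 : ℝ) h₀, c ≤ I1 h)
    (hC0c : ∀ h ∈ Set.Ioc (0 : ℝ) h₀, c₀ ≤ C0 h) :
    ∃ B > 0, ∀ h ∈ Set.Ioc (0 : ℝ) h₀,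
      |C0 h / (h ^ 2 + I0 h) ^ t /
          (C0 h / (h ^ 2 + I0 h) ^ t + C1 h / (h ^ 2 + I1 h) ^ t) - 1|
        ≤ B * h ^ (2 * t) ∧
      0 ≤ C1 h / (h ^ 2 + I1 h) ^ t /
          (C0 h / (h ^ 2 + I0 h) ^ t + C1 h / (h ^ 2 + I1 h) ^ t) ∧
      C1 h / (h ^ 2 + I1 h) ^ t /
          (C0 h / (h ^ 2 + I0 h) ^ t + C1 h / (h ^ 2 + I1 h) ^ t)
        ≤ B * h ^ (2 * t) := by
  refine ⟨(1 + A) ^ t / (c₀ * c ^ t), by positivity, ?_⟩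
  intro h hh
  obtain ⟨hhpos, hhle⟩ := hh
  set a := (h ^ 2 + I0 h) ^ t with ha_def
  set b := (h ^ 2 + I1 h) ^ t with hb_def
  have hI0h := hI0 h ⟨hhpos, hhle⟩
  have hI1h := hI1 h ⟨hhpos, hhle⟩
  have hC0h := hC0 h ⟨hhpos, hhle⟩
  have hC1h := hC1 h ⟨hhpos, hhle⟩
  have hC0ch := hC0c h ⟨hhpos, hhle⟩
  have hI0Ah := hI0A h ⟨hhpos, hhle⟩
  have hI1ch := hI1c h ⟨hhpos, hhle⟩
  have hh2 : (0:ℝ) < h ^ 2 := by positivity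
  have ha_pos : 0 < a := Real.rpow_pos_of_pos (by linarith) t
  have hb_pos : 0 < b := Real.rpow_pos_of_pos (by linarith) t
  have hα0_pos : 0 < C0 h / a := div_pos (by linarith) ha_pos
  have hα1_nonneg : 0 ≤ C1 h / b := div_nonneg hC1h.1 hb_pos.le
  have hS_pos : 0 < C0 h / a + C1 h / b := by linarith
  -- upper bound on a
  have h2t : h ^ (2 * t) = (h ^ 2 : ℝ) ^ t := by
    rw [← Real.rpow_natCast h 2, ← Real.rpow_mul hhpos.le]
    norm_num
  have ha_le : a ≤ (1 + A) ^ t * h ^ (2 * t) := by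
    rw [h2t, ← Real.mul_rpow (by positivity) hh2.le]
    exact Real.rpow_le_rpow (by linarith) (by nlinarith) ht.le
  have hb_ge : c ^ t ≤ b := Real.rpow_le_rpow hc.le (by nlinarith) ht.le
  -- key bound: ω1 ≤ B h^(2t)
  have hratio : C1 h / b / (C0 h / a) = (C1 h * a) / (C0 h * b) := by
    field_simp
  have key : C1 h / b / (C0 h / a + C1 h / b) ≤ (1 + A) ^ t / (c₀ * c ^ t) * h ^ (2 * t) := by
    have step1 : C1 h / b / (C0 h / a + C1 h / b) ≤ C1 h / b / (C0 h / a) :=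
      div_le_div_of_nonneg_left hα1_nonneg hα0_pos (by linarith)
    have step2 : (C1 h * a) / (C0 h * b) ≤
        (1 * ((1 + A) ^ t * h ^ (2 * t))) / (c₀ * c ^ t) := by
      apply div_le_div₀ (by positivity)
        (mul_le_mul hC1h.2 ha_le ha_pos.le one_pos.le)
        (by positivity)
        (mul_le_mul hC0ch hb_ge (by positivity) (by linarith))
      -- nothing
    calc C1 h / b / (C0 h / a + C1 h / b) ≤ C1 h / b / (C0 h / a) := step1
      _ = (C1 h * a) / (C0 h * b) := hratio
      _ ≤ (1 * ((1 + A) ^ t * h ^ (2 * t))) / (c₀ * c ^ t) := step2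
      _ = (1 + A) ^ t / (c₀ * c ^ t) * h ^ (2 * t) := by
          rw [one_mul, mul_div_right_comm]
  have hsum1 : C0 h / a / (C0 h / a + C1 h / b) + C1 h / b / (C0 h / a + C1 h / b) = 1 := by
    rw [← add_div, div_self hS_pos.ne']
  have habs : C0 h / a / (C0 h / a + C1 h / b) - 1 =
      -(C1 h / b / (C0 h / a + C1 h / b)) := by linarith
  refine ⟨?_, div_nonneg hα1_nonneg hS_pos.le, key⟩
  rw [habs, abs_neg, abs_of_nonneg (div_nonneg hα1_nonneg hS_pos.le)]
  exact key
end

section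
/- Let r ≥ 2 be an integer. For q = 1, 2 let x^{(q)}_{i_q-r} < x^{(q)}_{i_q-r+1} < … < x^{(q)}_{i_q+r-1} be pairwise distinct real nodes, let f : ℝ² → ℝ, and let x* = (x₁*, x₂*) with x^{(q)}_{i_q-1} < x_q* < x^{(q)}_{i_q} for q = 1, 2. Fix an integer l with r ≤ l ≤ 2r−2 and a pair j = (j₁, j₂) with 0 ≤ j₁, j₂ ≤ 2r−2−l. Let p^{l+1}_j be the tensor-product Lagrange interpolant of f on the Cartesian product {x^{(1)}_{i_1-r+j_1}, …, x^{(1)}_{i_1-r+j_1+l+1}} × {x^{(2)}_{i_2-r+j_2}, …, x^{(2)}_{i_2-r+j_2+l+1}}, and for each v = (v₁, v₂) ∈ {0,1}² let p^{l}_{j+v} be the tensor-product Lagrange interpolant of f on {x^{(1)}_{i_1-r+j_1+v_1}, …, x^{(1)}_{i_1-r+j_1+v_1+l}} × {x^{(2)}_{i_2-r+j_2+v_2}, …, x^{(2)}_{i_2-r+j_2+v_2+l}}. Then p^{l+1}_j(x*) = Σ_{v∈{0,1}²} C^l_{j_1, j_1+v_1}(x₁*) · C^l_{j_2, j_2+v_2}(x₂*)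 · p^{l}_{j+v}(x*), where for the coordinate-q grid C^l_{j_q, j_q}(x_q*) = (x_q* − x^{(q)}_{i_q-r+j_q+l+1})/(x^{(q)}_{i_q-r+j_q} − x^{(q)}_{i_q-r+j_q+l+1}) and C^l_{j_q, j_q+1}(x_q*) = 1 − C^l_{j_q, j_q}(x_q*). -/
/-- Value at `(u, v)` of the tensor-product Lagrange interpolant of `f` on the
Cartesian product of the node sets `{x1 k : k ∈ s1}` and `{x2 k : k ∈ s2}`. -/
noncomputable def tlag2 (s1 s2 : Finset ℤ) (x1 x2 : ℤ → ℝ) (f : ℝ → ℝ → ℝ)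
    (u v : ℝ) : ℝ :=
  ∑ k1 ∈ s1, ∑ k2 ∈ s2,
    f (x1 k1) (x2 k2) *
      ((∏ m ∈ s1.erase k1, (u - x1 m) / (x1 k1 - x1 m)) *
       (∏ m ∈ s2.erase k2, (v - x2 m) / (x2 k2 - x2 m)))


noncomputable def lag1 (s : Finset ℤ) (x : ℤ → ℝ) (g : ℤ → ℝ) (u : ℝ) : ℝ :=
  ∑ k ∈ s, g k * ∏ m ∈ s.erase k, (u - x m) / (x k - x m)

lemma neville (a l : ℤ) (hl : 0 ≤ l) (x : ℤ → ℝ) (g : ℤ → ℝ) (u : ℝ)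
    (hd : ∀ k ∈ Finset.Icc a (a + l + 1), ∀ m ∈ Finset.Icc a (a + l + 1), k ≠ m → x k ≠ x m)
    (hu : ∀ m ∈ Finset.Icc a (a + l + 1), u ≠ x m) :
    lag1 (Finset.Icc a (a + l + 1)) x g u =
      ((u - x (a + l + 1)) / (x a - x (a + l + 1))) * lag1 (Finset.Icc a (a + l)) x g u +
      (1 - (u - x (a + l + 1)) / (x a - x (a + l + 1))) *
        lag1 (Finset.Icc (a + 1) (a + l + 1)) x g u := by
  have ha : a ∈ Finset.Icc a (a + l + 1) := by simp; omega
  have hb : a + l + 1 ∈ Finset.Icc a (a + l + 1) := by simp; omega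
  have hdsub : x a - x (a + l + 1) ≠ 0 := sub_ne_zero.2 (hd a ha (a + l + 1) hb (by omega))
  have hua : u - x a ≠ 0 := sub_ne_zero.2 (hu a ha)
  have hub : u - x (a + l + 1) ≠ 0 := sub_ne_zero.2 (hu (a + l + 1) hb)
  -- product relations
  have hBL : ∀ k ∈ Finset.Icc a (a + l),
      (∏ m ∈ (Finset.Icc a (a + l + 1)).erase k, (u - x m) / (x k - x m)) =
      ((u - x (a + l + 1)) / (x k - x (a + l + 1))) *
        ∏ m ∈ (Finset.Icc a (a + l)).erase k, (u - x m) / (x k - x m) := by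
    intro k hk
    have : (Finset.Icc a (a + l + 1)).erase k =
        insert (a + l + 1) ((Finset.Icc a (a + l)).erase k) := by
      simp only [Finset.mem_Icc] at hk; ext m; simp; omega
    rw [this, Finset.prod_insert (by simp)]
  have hBR : ∀ k ∈ Finset.Icc (a + 1) (a + l + 1),
      (∏ m ∈ (Finset.Icc a (a + l + 1)).erase k, (u - x m) / (x k - x m)) =
      ((u - x a) / (x k - x a)) *
        ∏ m ∈ (Finset.Icc (a + 1) (a + l + 1)).erase k, (u - x m) / (x k - x m) := by
    intro k hk
    have : (Finset.Icc a (a + l + 1)).erase k =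
        insert a ((Finset.Icc (a + 1) (a + l + 1)).erase k) := by
      simp only [Finset.mem_Icc] at hk; ext m; simp; omega
    rw [this, Finset.prod_insert (by simp)]
  -- interior identity
  have hint : ∀ k ∈ Finset.Icc (a + 1) (a + l),
      (∏ m ∈ (Finset.Icc a (a + l + 1)).erase k, (u - x m) / (x k - x m)) =
      ((u - x (a + l + 1)) / (x a - x (a + l + 1))) *
        (∏ m ∈ (Finset.Icc a (a + l)).erase k, (u - x m) / (x k - x m)) +
      (1 - (u - x (a + l + 1)) / (x a - x (a + l + 1))) *
        (∏ m ∈ (Finset.Icc (a + 1) (a + l + 1)).erase k, (u - x m) / (x k - x m)) := by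
    intro k hk
    simp only [Finset.mem_Icc] at hk
    have hk1 : k ∈ Finset.Icc a (a + l) := by simp; omega
    have hk2 : k ∈ Finset.Icc (a + 1) (a + l + 1) := by simp; omega
    have hk3 : k ∈ Finset.Icc a (a + l + 1) := by simp; omega
    have hka : x k - x a ≠ 0 := sub_ne_zero.2 (hd k hk3 a ha (by omega))
    have hkb : x k - x (a + l + 1) ≠ 0 := sub_ne_zero.2 (hd k hk3 (a + l + 1) hb (by omega))
    have e1 := hBL k hk1
    have e2 := hBR k hk2
    have f1 : (∏ m ∈ (Finset.Icc a (a + l)).erase k, (u - x m) / (x k - x m)) =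
        ((x k - x (a + l + 1)) / (u - x (a + l + 1))) *
        ∏ m ∈ (Finset.Icc a (a + l + 1)).erase k, (u - x m) / (x k - x m) := by
      rw [e1, ← mul_assoc, div_mul_div_comm,
        mul_comm (x k - x (a + l + 1)) (u - x (a + l + 1)),
        div_self (mul_ne_zero hub hkb), one_mul]
    have f2 : (∏ m ∈ (Finset.Icc (a + 1) (a + l + 1)).erase k, (u - x m) / (x k - x m)) =
        ((x k - x a) / (u - x a)) *
        ∏ m ∈ (Finset.Icc a (a + l + 1)).erase k, (u - x m) / (x k - x m) := by
      rw [e2, ← mul_assoc, div_mul_div_comm,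
        mul_comm (x k - x a) (u - x a),
        div_self (mul_ne_zero hua hka), one_mul]
    rw [f1, f2]
    have key : (u - x (a + l + 1)) / (x a - x (a + l + 1)) *
          ((x k - x (a + l + 1)) / (u - x (a + l + 1))) +
        (1 - (u - x (a + l + 1)) / (x a - x (a + l + 1))) * ((x k - x a) / (u - x a)) = 1 := by
      field_simp
      ring
    linear_combination (-(∏ m ∈ (Finset.Icc a (a + l + 1)).erase k,
      (u - x m) / (x k - x m))) * key
  have hdsub' : x (a + l + 1) - x a ≠ 0 :=
    sub_ne_zero.2 (hd (a + l + 1) hb a ha (by omega))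
  -- split sums
  have hsplitBig : Finset.Icc a (a + l + 1) =
      insert a (insert (a + l + 1) (Finset.Icc (a + 1) (a + l))) := by
    ext m; simp only [Finset.mem_insert, Finset.mem_Icc]; omega
  have hsplitL : Finset.Icc a (a + l) = insert a (Finset.Icc (a + 1) (a + l)) := by
    ext m; simp only [Finset.mem_insert, Finset.mem_Icc]; omega
  have hsplitR : Finset.Icc (a + 1) (a + l + 1) =
      insert (a + l + 1) (Finset.Icc (a + 1) (a + l)) := by
    ext m; simp only [Finset.mem_insert, Finset.mem_Icc]; omega
  have hBa := hBL a (by simp only [Finset.mem_Icc]; omega)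
  have hBb := hBR (a + l + 1) (by simp only [Finset.mem_Icc]; omega)
  have h1C : (1 : ℝ) - (u - x (a + l + 1)) / (x a - x (a + l + 1)) =
      (u - x a) / (x (a + l + 1) - x a) := by
    field_simp
    ring
  have hSplitSum : ∑ k ∈ Finset.Icc (a + 1) (a + l),
        g k * ∏ m ∈ (Finset.Icc a (a + l + 1)).erase k, (u - x m) / (x k - x m) =
      ((u - x (a + l + 1)) / (x a - x (a + l + 1))) * ∑ k ∈ Finset.Icc (a + 1) (a + l),
          g k * ∏ m ∈ (Finset.Icc a (a + l)).erase k, (u - x m) / (x k - x m) +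
        (1 - (u - x (a + l + 1)) / (x a - x (a + l + 1))) * ∑ k ∈ Finset.Icc (a + 1) (a + l),
          g k * ∏ m ∈ (Finset.Icc (a + 1) (a + l + 1)).erase k, (u - x m) / (x k - x m) := by
    rw [Finset.mul_sum, Finset.mul_sum, ← Finset.sum_add_distrib]
    exact Finset.sum_congr rfl fun k hk => by rw [hint k hk]; ring
  unfold lag1
  rw [hsplitBig]
  rw [Finset.sum_insert (by simp only [Finset.mem_insert, Finset.mem_Icc]; omega),
    Finset.sum_insert (by simp only [Finset.mem_Icc]; omega), ← hsplitBig]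
  conv_rhs =>
    rw [hsplitL, Finset.sum_insert (by simp only [Finset.mem_Icc]; omega), ← hsplitL,
      hsplitR, Finset.sum_insert (by simp only [Finset.mem_Icc]; omega), ← hsplitR]
  rw [hBa, hBb, hSplitSum, h1C]
  ring

lemma tlag2_eq (s1 s2 : Finset ℤ) (x1 x2 : ℤ → ℝ) (f : ℝ → ℝ → ℝ) (u v : ℝ) :
    tlag2 s1 s2 x1 x2 f u v =
      lag1 s1 x1 (fun k1 => lag1 s2 x2 (fun k2 => f (x1 k1) (x2 k2)) v) u := by
  unfold tlag2 lag1
  refine Finset.sum_congr rfl fun k1 _ => ?_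
  rw [Finset.sum_mul]
  exact Finset.sum_congr rfl fun k2 _ => by ring

lemma lag1_linear (s : Finset ℤ) (x : ℤ → ℝ) (g1 g2 : ℤ → ℝ) (c1 c2 u : ℝ) :
    lag1 s x (fun k => c1 * g1 k + c2 * g2 k) u =
      c1 * lag1 s x g1 u + c2 * lag1 s x g2 u := by
  unfold lag1
  rw [Finset.mul_sum, Finset.mul_sum, ← Finset.sum_add_distrib]
  exact Finset.sum_congr rfl fun k _ => by ring

lemma nodes_ok (r i j l : ℤ) (hr : 2 ≤ r) (hl : r ≤ l) (hl2 : l ≤ 2 * r - 2)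
    (hj : 0 ≤ j) (hj' : j ≤ 2 * r - 2 - l) (x : ℤ → ℝ)
    (hmono : ∀ k k' : ℤ, i - r ≤ k → k < k' → k' ≤ i + r - 1 → x k < x k')
    (xs : ℝ) (hx : x (i - 1) < xs) (hx' : xs < x i) :
    (∀ k ∈ Finset.Icc (i - r + j) (i - r + j + l + 1),
        ∀ m ∈ Finset.Icc (i - r + j) (i - r + j + l + 1), k ≠ m → x k ≠ x m) ∧
      (∀ m ∈ Finset.Icc (i - r + j) (i - r + j + l + 1), xs ≠ x m) := by
  constructor
  · intro k hk m hm hkm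
    simp only [Finset.mem_Icc] at hk hm
    rcases lt_or_gt_of_ne hkm with h | h
    · exact ne_of_lt (hmono k m (by omega) h (by omega))
    · exact (ne_of_lt (hmono m k (by omega) h (by omega))).symm
  · intro m hm
    simp only [Finset.mem_Icc] at hm
    rcases le_or_gt m (i - 1) with h | h
    · have : x m ≤ x (i - 1) := by
        rcases eq_or_lt_of_le h with h' | h'
        · rw [h']
        · exact le_of_lt (hmono m (i - 1) (by omega) h' (by omega))
      exact (ne_of_lt (lt_of_le_of_lt this hx)).symm
    · have : x i ≤ x m := by
        rcases eq_or_lt_of_le (show i ≤ m by omega) with h' | h'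
        · rw [← h']
        · exact le_of_lt (hmono i m (by omega) h' (by omega))
      exact ne_of_lt (lt_of_lt_of_le hx' this)

theorem stmt10 (r i1 i2 l j1 j2 : ℤ) (hr : 2 ≤ r)
    (x1 x2 : ℤ → ℝ) (f : ℝ → ℝ → ℝ)
    (hmono1 : ∀ k k' : ℤ, i1 - r ≤ k → k < k' → k' ≤ i1 + r - 1 → x1 k < x1 k')
    (hmono2 : ∀ k k' : ℤ, i2 - r ≤ k → k < k' → k' ≤ i2 + r - 1 → x2 k < x2 k')
    (hl : r ≤ l) (hl2 : l ≤ 2 * r - 2)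
    (hj1 : 0 ≤ j1) (hj1' : j1 ≤ 2 * r - 2 - l) (hj2 : 0 ≤ j2) (hj2' : j2 ≤ 2 * r - 2 - l)
    (xs1 xs2 : ℝ) (hx1 : x1 (i1 - 1) < xs1) (hx1' : xs1 < x1 i1)
    (hx2 : x2 (i2 - 1) < xs2) (hx2' : xs2 < x2 i2) :
    tlag2 (Finset.Icc (i1 - r + j1) (i1 - r + j1 + l + 1))
        (Finset.Icc (i2 - r + j2) (i2 - r + j2 + l + 1)) x1 x2 f xs1 xs2 =
      ((xs1 - x1 (i1 - r + j1 + l + 1)) / (x1 (i1 - r + j1) - x1 (i1 - r + j1 + l + 1))) *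
          ((xs2 - x2 (i2 - r + j2 + l + 1)) / (x2 (i2 - r + j2) - x2 (i2 - r + j2 + l + 1))) *
          tlag2 (Finset.Icc (i1 - r + j1) (i1 - r + j1 + l))
            (Finset.Icc (i2 - r + j2) (i2 - r + j2 + l)) x1 x2 f xs1 xs2 +
        (1 - (xs1 - x1 (i1 - r + j1 + l + 1)) / (x1 (i1 - r + j1) - x1 (i1 - r + j1 + l + 1))) *
          ((xs2 - x2 (i2 - r + j2 + l + 1)) / (x2 (i2 - r + j2) - x2 (i2 - r + j2 + l + 1))) *
          tlag2 (Finset.Icc (i1 - r + j1 + 1) (i1 - r + j1 + l + 1))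
            (Finset.Icc (i2 - r + j2) (i2 - r + j2 + l)) x1 x2 f xs1 xs2 +
        ((xs1 - x1 (i1 - r + j1 + l + 1)) / (x1 (i1 - r + j1) - x1 (i1 - r + j1 + l + 1))) *
          (1 - (xs2 - x2 (i2 - r + j2 + l + 1)) / (x2 (i2 - r + j2) - x2 (i2 - r + j2 + l + 1))) *
          tlag2 (Finset.Icc (i1 - r + j1) (i1 - r + j1 + l))
            (Finset.Icc (i2 - r + j2 + 1) (i2 - r + j2 + l + 1)) x1 x2 f xs1 xs2 +
        (1 - (xs1 - x1 (i1 - r + j1 + l + 1)) / (x1 (i1 - r + j1) - x1 (i1 - r + j1 + l + 1))) *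
          (1 - (xs2 - x2 (i2 - r + j2 + l + 1)) / (x2 (i2 - r + j2) - x2 (i2 - r + j2 + l + 1))) *
          tlag2 (Finset.Icc (i1 - r + j1 + 1) (i1 - r + j1 + l + 1))
            (Finset.Icc (i2 - r + j2 + 1) (i2 - r + j2 + l + 1)) x1 x2 f xs1 xs2 := by
  obtain ⟨hd1, hu1⟩ := nodes_ok r i1 j1 l hr hl hl2 hj1 hj1' x1 hmono1 xs1 hx1 hx1'
  obtain ⟨hd2, hu2⟩ := nodes_ok r i2 j2 l hr hl hl2 hj2 hj2' x2 hmono2 xs2 hx2 hx2'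
  have hl0 : (0 : ℤ) ≤ l := by omega
  have nev2 : ∀ k1 : ℤ,
      lag1 (Finset.Icc (i2 - r + j2) (i2 - r + j2 + l + 1)) x2
          (fun k2 => f (x1 k1) (x2 k2)) xs2 =
        ((xs2 - x2 (i2 - r + j2 + l + 1)) / (x2 (i2 - r + j2) - x2 (i2 - r + j2 + l + 1))) *
            lag1 (Finset.Icc (i2 - r + j2) (i2 - r + j2 + l)) x2
              (fun k2 => f (x1 k1) (x2 k2)) xs2 +
          (1 - (xs2 - x2 (i2 - r + j2 + l + 1)) / (x2 (i2 - r + j2) - x2 (i2 - r + j2 + l + 1))) *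
            lag1 (Finset.Icc (i2 - r + j2 + 1) (i2 - r + j2 + l + 1)) x2
              (fun k2 => f (x1 k1) (x2 k2)) xs2 :=
    fun k1 => neville (i2 - r + j2) l hl0 x2 _ xs2 hd2 hu2
  rw [tlag2_eq]
  have hfun : (fun k1 => lag1 (Finset.Icc (i2 - r + j2) (i2 - r + j2 + l + 1)) x2
      (fun k2 => f (x1 k1) (x2 k2)) xs2) =
      fun k1 =>
        ((xs2 - x2 (i2 - r + j2 + l + 1)) / (x2 (i2 - r + j2) - x2 (i2 - r + j2 + l + 1))) *
            lag1 (Finset.Icc (i2 - r + j2) (i2 - r + j2 + l)) x2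
              (fun k2 => f (x1 k1) (x2 k2)) xs2 +
          (1 - (xs2 - x2 (i2 - r + j2 + l + 1)) / (x2 (i2 - r + j2) - x2 (i2 - r + j2 + l + 1))) *
            lag1 (Finset.Icc (i2 - r + j2 + 1) (i2 - r + j2 + l + 1)) x2
              (fun k2 => f (x1 k1) (x2 k2)) xs2 :=
    funext nev2
  rw [hfun]
  rw [neville (i1 - r + j1) l hl0 x1 _ xs1 hd1 hu1]
  rw [lag1_linear, lag1_linear]
  rw [← tlag2_eq, ← tlag2_eq, ← tlag2_eq, ← tlag2_eq]
  ring
end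

section
/- Let n ≥ 1 and r ≥ 2 be integers. For each coordinate q = 1, …, n let x^{(q)}_{i_q-r} < … < x^{(q)}_{i_q+r-1} be pairwise distinct real nodes, let f : ℝⁿ → ℝ, and let x* = (x₁*, …, x_n*) with x^{(q)}_{i_q-1} < x_q* < x^{(q)}_{i_q} for each q. Fix an integer l with r ≤ l ≤ 2r−2 and a multi-index j = (j₁, …, j_n) with 0 ≤ j_q ≤ 2r−2−l for each q. Let P^{l+1}_j be the tensor-product Lagrange interpolant of f on Π_{q=1}^n {x^{(q)}_{i_q-r+j_q}, …, x^{(q)}_{i_q-r+j_q+l+1}}, and for each v ∈ {0,1}ⁿ let P^{l}_{j+v} be the tensor-product Lagrange interpolant of f on Π_{q=1}^n {x^{(q)}_{i_q-r+j_q+v_q}, …, x^{(q)}_{i_q-r+j_q+v_q+l}}. Then P^{l+1}_j(x*) = Σ_{v∈{0,1}ⁿ} (Π_{q=1}^n C^l_{j_q, j_q+v_q}(x_q*)) · P^{l}_{j+v}(x*), where for each coordinate q: C^l_{j_q, j_q}(x_q*) = (x_q* − x^{(q)}_{i_q-r+j_q+l+1})/(x^{(q)}_{i_q-r+j_q} −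 x^{(q)}_{i_q-r+j_q+l+1}) and C^l_{j_q, j_q+1}(x_q*) = 1 − C^l_{j_q, j_q}(x_q*). -/
/-- Value at `y` of the tensor-product Lagrange interpolant of `f` on the Cartesian
product of the node sets `{x q k : k ∈ s q}`, `q = 1, …, n`. -/
noncomputable def tensorLagEval (n : ℕ) (s : Fin n → Finset ℤ) (x : Fin n → ℤ → ℝ)
    (f : (Fin n → ℝ) → ℝ) (y : Fin n → ℝ) : ℝ :=
  ∑ l ∈ Fintype.piFinset s, f (fun q => x q (l q)) *
    ∏ q, ∏ k ∈ (s q).erase (l q), (y q - x q k) / (x q (l q) - x q k)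

/-- Lagrange basis coefficient at node `k` for the node set `Icc a b`, with an
indicator making it `0` when `k ∉ Icc a b`. -/
noncomputable def lagCoef (u : ℤ → ℝ) (y : ℝ) (a b k : ℤ) : ℝ :=
  if k ∈ Finset.Icc a b then ∏ m ∈ (Finset.Icc a b).erase k, (y - u m) / (u k - u m) else 0

lemma neville1D (u : ℤ → ℝ) (y : ℝ) (a l : ℤ) (hl : 0 ≤ l)
    (hd : ∀ k k' : ℤ, a ≤ k → k < k' → k' ≤ a + l + 1 → u k ≠ u k')
    (k : ℤ) (hk : k ∈ Finset.Icc a (a + l + 1)) :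
    ∏ m ∈ (Finset.Icc a (a + l + 1)).erase k, (y - u m) / (u k - u m) =
      (y - u (a + l + 1)) / (u a - u (a + l + 1)) * lagCoef u y a (a + l) k +
      (1 - (y - u (a + l + 1)) / (u a - u (a + l + 1))) * lagCoef u y (a + 1) (a + l + 1) k := by
  simp only [Finset.mem_Icc] at hk
  have hab : u a ≠ u (a + l + 1) := hd a (a + l + 1) le_rfl (by omega) le_rfl
  set c : ℝ := (y - u (a + l + 1)) / (u a - u (a + l + 1)) with hc
  rcases eq_or_ne a k with rfl | hka
  · have h1 : (Finset.Icc a (a + l + 1)).erase a = insert (a + l + 1) (Finset.Icc (a + 1) (a + l)) := by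
      ext m; simp only [Finset.mem_insert, Finset.mem_erase, Finset.mem_Icc]; omega
    have h2 : lagCoef u y (a + 1) (a + l + 1) a = 0 := by
      rw [lagCoef, if_neg (by simp only [Finset.mem_Icc]; omega)]
    have h3 : lagCoef u y a (a + l) a = ∏ m ∈ Finset.Icc (a + 1) (a + l), (y - u m) / (u a - u m) := by
      rw [lagCoef, if_pos (by simp only [Finset.mem_insert, Finset.mem_erase, Finset.mem_Icc]; omega)]
      congr 1
      ext m; simp only [Finset.mem_insert, Finset.mem_erase, Finset.mem_Icc]; omega
    rw [h1, h2, h3, Finset.prod_insert (by simp only [Finset.mem_insert, Finset.mem_erase, Finset.mem_Icc]; omega)]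
    ring
  rcases eq_or_ne (a + l + 1) k with rfl | hkb
  · have h1 : (Finset.Icc a (a + l + 1)).erase (a + l + 1) = insert a (Finset.Icc (a + 1) (a + l)) := by
      ext m; simp only [Finset.mem_insert, Finset.mem_erase, Finset.mem_Icc]; omega
    have h2 : lagCoef u y a (a + l) (a + l + 1) = 0 := by
      rw [lagCoef, if_neg (by simp only [Finset.mem_Icc]; omega)]
    have h3 : lagCoef u y (a + 1) (a + l + 1) (a + l + 1) =
        ∏ m ∈ Finset.Icc (a + 1) (a + l), (y - u m) / (u (a + l + 1) - u m) := by
      rw [lagCoef, if_pos (by simp only [Finset.mem_insert, Finset.mem_erase, Finset.mem_Icc]; omega)]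
      congr 1
      ext m; simp only [Finset.mem_insert, Finset.mem_erase, Finset.mem_Icc]; omega
    rw [h1, h2, h3, Finset.prod_insert (by simp only [Finset.mem_insert, Finset.mem_erase, Finset.mem_Icc]; omega)]
    have hone : (y - u a) / (u (a + l + 1) - u a) = 1 - c := by
      rw [hc]
      have hne : u a - u (a + l + 1) ≠ 0 := sub_ne_zero.mpr hab
      have hne2 : u (a + l + 1) - u a ≠ 0 := sub_ne_zero.mpr (fun h => hab h.symm)
      field_simp
      ring
    rw [hone]; ring
  · have hk1 : a < k := lt_of_le_of_ne hk.1 hka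
    have hk2 : k < a + l + 1 := lt_of_le_of_ne hk.2 (fun h => hkb h.symm)
    have hua : u a ≠ u k := hd a k le_rfl hk1 (by omega)
    have hub : u k ≠ u (a + l + 1) := hd k (a + l + 1) (by omega) hk2 le_rfl
    have h1 : (Finset.Icc a (a + l + 1)).erase k =
        insert a (insert (a + l + 1) ((Finset.Icc (a + 1) (a + l)).erase k)) := by
      ext m; simp only [Finset.mem_insert, Finset.mem_erase, Finset.mem_Icc]; omega
    have h2 : lagCoef u y a (a + l) k =
        (y - u a) / (u k - u a) * ∏ m ∈ (Finset.Icc (a + 1) (a + l)).erase k, (y - u m) / (u k - u m) := by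
      rw [lagCoef, if_pos (by simp only [Finset.mem_insert, Finset.mem_erase, Finset.mem_Icc]; omega)]
      rw [show (Finset.Icc a (a + l)).erase k = insert a ((Finset.Icc (a + 1) (a + l)).erase k) by
        ext m; simp only [Finset.mem_insert, Finset.mem_erase, Finset.mem_Icc]; omega]
      rw [Finset.prod_insert (by simp only [Finset.mem_insert, Finset.mem_erase, Finset.mem_Icc]; omega)]
    have h3 : lagCoef u y (a + 1) (a + l + 1) k =
        (y - u (a + l + 1)) / (u k - u (a + l + 1)) *
          ∏ m ∈ (Finset.Icc (a + 1) (a + l)).erase k, (y - u m) / (u k - u m) := by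
      rw [lagCoef, if_pos (by simp only [Finset.mem_insert, Finset.mem_erase, Finset.mem_Icc]; omega)]
      rw [show (Finset.Icc (a + 1) (a + l + 1)).erase k =
          insert (a + l + 1) ((Finset.Icc (a + 1) (a + l)).erase k) by
        ext m; simp only [Finset.mem_insert, Finset.mem_erase, Finset.mem_Icc]; omega]
      rw [Finset.prod_insert (by simp only [Finset.mem_insert, Finset.mem_erase, Finset.mem_Icc]; omega)]
    rw [h1, Finset.prod_insert (by simp only [Finset.mem_insert, Finset.mem_erase, Finset.mem_Icc]; omega),
      Finset.prod_insert (by simp only [Finset.mem_insert, Finset.mem_erase, Finset.mem_Icc]; omega), h2, h3]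
    have key : (y - u a) / (u k - u a) * ((y - u (a + l + 1)) / (u k - u (a + l + 1))) =
        c * ((y - u a) / (u k - u a)) + (1 - c) * ((y - u (a + l + 1)) / (u k - u (a + l + 1))) := by
      rw [hc]
      have h1' : u a - u (a + l + 1) ≠ 0 := sub_ne_zero.mpr hab
      have h2' : u k - u a ≠ 0 := sub_ne_zero.mpr (fun h => hua h.symm)
      have h3' : u k - u (a + l + 1) ≠ 0 := sub_ne_zero.mpr hub
      field_simp
      ring
    calc (y - u a) / (u k - u a) * ((y - u (a + l + 1)) / (u k - u (a + l + 1)) *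
          ∏ m ∈ (Finset.Icc (a + 1) (a + l)).erase k, (y - u m) / (u k - u m))
        = ((y - u a) / (u k - u a) * ((y - u (a + l + 1)) / (u k - u (a + l + 1)))) *
          ∏ m ∈ (Finset.Icc (a + 1) (a + l)).erase k, (y - u m) / (u k - u m) := by ring
      _ = _ := by rw [key]; ring

lemma sum_restrict (n : ℕ) (x : Fin n → ℤ → ℝ) (f : (Fin n → ℝ) → ℝ) (xs : Fin n → ℝ)
    (a : Fin n → ℤ) (l : ℤ) (v : Fin n → ℤ) (hv : ∀ q, v q = 0 ∨ v q = 1) :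
    ∑ m ∈ Fintype.piFinset (fun q => Finset.Icc (a q) (a q + l + 1)),
      f (fun q => x q (m q)) * ∏ q, lagCoef (x q) (xs q) (a q + v q) (a q + v q + l) (m q)
    = tensorLagEval n (fun q => Finset.Icc (a q + v q) (a q + v q + l)) x f xs := by
  rw [tensorLagEval]
  have hsub : Fintype.piFinset (fun q => Finset.Icc (a q + v q) (a q + v q + l)) ⊆
      Fintype.piFinset (fun q => Finset.Icc (a q) (a q + l + 1)) := by
    apply Fintype.piFinset_subset
    intro q
    exact Finset.Icc_subset_Icc (by rcases hv q with h | h <;> omega)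
      (by rcases hv q with h | h <;> omega)
  symm
  calc ∑ m ∈ Fintype.piFinset (fun q => Finset.Icc (a q + v q) (a q + v q + l)),
        f (fun q => x q (m q)) *
          ∏ q, ∏ k ∈ (Finset.Icc (a q + v q) (a q + v q + l)).erase (m q),
            (xs q - x q k) / (x q (m q) - x q k)
      = ∑ m ∈ Fintype.piFinset (fun q => Finset.Icc (a q + v q) (a q + v q + l)),
        f (fun q => x q (m q)) *
          ∏ q, lagCoef (x q) (xs q) (a q + v q) (a q + v q + l) (m q) := by
        refine Finset.sum_congr rfl fun m hm => ?_
        congr 1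
        refine Finset.prod_congr rfl fun q _ => ?_
        rw [lagCoef, if_pos (Fintype.mem_piFinset.mp hm q)]
    _ = _ := by
        apply Finset.sum_subset hsub
        intro m hm hnot
        obtain ⟨q, hq⟩ := not_forall.mp (fun h => hnot (Fintype.mem_piFinset.mpr h))
        have hz : lagCoef (x q) (xs q) (a q + v q) (a q + v q + l) (m q) = 0 := by
          rw [lagCoef, if_neg hq]
        rw [Finset.prod_eq_zero (Finset.mem_univ q) hz, mul_zero]

theorem stmt12 (n : ℕ) (hn : 1 ≤ n) (r l : ℤ) (hr : 2 ≤ r)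
    (i j : Fin n → ℤ) (x : Fin n → ℤ → ℝ) (f : (Fin n → ℝ) → ℝ)
    (hmono : ∀ q : Fin n, ∀ k k' : ℤ,
      i q - r ≤ k → k < k' → k' ≤ i q + r - 1 → x q k < x q k')
    (hl : r ≤ l) (hl2 : l ≤ 2 * r - 2)
    (hj : ∀ q : Fin n, 0 ≤ j q ∧ j q ≤ 2 * r - 2 - l)
    (xs : Fin n → ℝ) (hxs : ∀ q : Fin n, x q (i q - 1) < xs q ∧ xs q < x q (i q)) :
    tensorLagEval n (fun q => Finset.Icc (i q - r + j q) (i q - r + j q + l + 1)) x f xs =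
      ∑ v ∈ Fintype.piFinset (fun _ : Fin n => ({0, 1} : Finset ℤ)),
        (∏ q : Fin n,
          (if v q = 0 then
            (xs q - x q (i q - r + j q + l + 1)) /
              (x q (i q - r + j q) - x q (i q - r + j q + l + 1))
          else
            1 - (xs q - x q (i q - r + j q + l + 1)) /
              (x q (i q - r + j q) - x q (i q - r + j q + l + 1)))) *
        tensorLagEval n
          (fun q => Finset.Icc (i q - r + j q + v q) (i q - r + j q + v q + l)) x f xs := by
  have hd : ∀ q : Fin n, ∀ k k' : ℤ, i q - r + j q ≤ k → k < k' → k' ≤ i q - r + j q + l + 1 →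
      x q k ≠ x q k' := fun q k k' h1 h2 h3 =>
    ne_of_lt (hmono q k k' (by have := (hj q).1; omega) h2 (by have := (hj q).2; omega))
  rw [tensorLagEval]
  calc
    ∑ m ∈ Fintype.piFinset (fun q => Finset.Icc (i q - r + j q) (i q - r + j q + l + 1)),
        f (fun q => x q (m q)) *
          ∏ q, ∏ k ∈ (Finset.Icc (i q - r + j q) (i q - r + j q + l + 1)).erase (m q),
            (xs q - x q k) / (x q (m q) - x q k)
      = ∑ m ∈ Fintype.piFinset (fun q => Finset.Icc (i q - r + j q) (i q - r + j q + l + 1)),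
        f (fun q => x q (m q)) *
          ∑ v ∈ Fintype.piFinset (fun _ : Fin n => ({0, 1} : Finset ℤ)),
            ∏ q, ((if v q = 0 then
                (xs q - x q (i q - r + j q + l + 1)) /
                  (x q (i q - r + j q) - x q (i q - r + j q + l + 1))
              else
                1 - (xs q - x q (i q - r + j q + l + 1)) /
                  (x q (i q - r + j q) - x q (i q - r + j q + l + 1))) *
              lagCoef (x q) (xs q) (i q - r + j q + v q) (i q - r + j q + v q + l) (m q)) := by
        refine Finset.sum_congr rfl fun m hm => ?_
        congr 1
        have key : ∀ q : Fin n,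
            (∏ k ∈ (Finset.Icc (i q - r + j q) (i q - r + j q + l + 1)).erase (m q),
              (xs q - x q k) / (x q (m q) - x q k)) =
            ∑ w ∈ ({0, 1} : Finset ℤ),
              ((if w = 0 then
                  (xs q - x q (i q - r + j q + l + 1)) /
                    (x q (i q - r + j q) - x q (i q - r + j q + l + 1))
                else
                  1 - (xs q - x q (i q - r + j q + l + 1)) /
                    (x q (i q - r + j q) - x q (i q - r + j q + l + 1))) *
                lagCoef (x q) (xs q) (i q - r + j q + w) (i q - r + j q + w + l) (m q)) := by
          intro q
          have hmq := Fintype.mem_piFinset.mp hm q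
          rw [Finset.sum_pair (by norm_num : (0:ℤ) ≠ 1)]
          rw [show i q - r + j q + (0:ℤ) = i q - r + j q from by ring,
            show i q - r + j q + (1:ℤ) + l = i q - r + j q + l + 1 from by ring]
          rw [neville1D (x q) (xs q) (i q - r + j q) l (by omega) (hd q) (m q) hmq]
          norm_num
        rw [Finset.prod_congr rfl (fun q _ => key q), Finset.prod_univ_sum]
    _ = ∑ v ∈ Fintype.piFinset (fun _ : Fin n => ({0, 1} : Finset ℤ)),
        ∑ m ∈ Fintype.piFinset (fun q => Finset.Icc (i q - r + j q) (i q - r + j q + l + 1)),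
          f (fun q => x q (m q)) *
            ∏ q, ((if v q = 0 then
                (xs q - x q (i q - r + j q + l + 1)) /
                  (x q (i q - r + j q) - x q (i q - r + j q + l + 1))
              else
                1 - (xs q - x q (i q - r + j q + l + 1)) /
                  (x q (i q - r + j q) - x q (i q - r + j q + l + 1))) *
              lagCoef (x q) (xs q) (i q - r + j q + v q) (i q - r + j q + v q + l) (m q)) := by
        simp_rw [Finset.mul_sum]
        rw [Finset.sum_comm]
    _ = ∑ v ∈ Fintype.piFinset (fun _ : Fin n => ({0, 1} : Finset ℤ)),
        (∏ q : Fin n,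
          (if v q = 0 then
            (xs q - x q (i q - r + j q + l + 1)) /
              (x q (i q - r + j q) - x q (i q - r + j q + l + 1))
          else
            1 - (xs q - x q (i q - r + j q + l + 1)) /
              (x q (i q - r + j q) - x q (i q - r + j q + l + 1)))) *
        ∑ m ∈ Fintype.piFinset (fun q => Finset.Icc (i q - r + j q) (i q - r + j q + l + 1)),
          f (fun q => x q (m q)) *
            ∏ q, lagCoef (x q) (xs q) (i q - r + j q + v q) (i q - r + j q + v q + l) (m q) := by
        refine Finset.sum_congr rfl fun v hv => ?_
        rw [Finset.mul_sum]
        refine Finset.sum_congr rfl fun m hm => ?_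
        rw [Finset.prod_mul_distrib]
        ring
    _ = _ := by
        refine Finset.sum_congr rfl fun v hv => ?_
        congr 1
        have hv' : ∀ q, v q = 0 ∨ v q = 1 := by
          intro q
          have := Fintype.mem_piFinset.mp hv q
          simpa using this
        exact sum_restrict n x f xs (fun q => i q - r + j q) l v hv'
end

section
/- Let n ≥ 1 and r ≥ 1 be integers. For each coordinate q = 1, …, n let x^{(q)}_k = a_q + k·h_q be uniform nodes with a_q ∈ ℝ and h_q > 0, let f : ℝⁿ → ℝ, fix indices i_1, …, i_n, and let m = (a_1 + (i_1 − 1/2)h_1, …, a_n + (i_n − 1/2)h_n) be the midpoint of the central cell. Let P_0^{2r-1} be the tensor-product Lagrange interpolant of f on Π_{q=1}^n {x^{(q)}_{i_q-r}, …, x^{(q)}_{i_q+r-1}}, and for each multi-index k ∈ {0, …, r−1}ⁿ let P_k^r be the tensor-product Lagrange interpolant of f on Π_{q=1}^n {x^{(q)}_{i_q-r+k_q}, …, x^{(q)}_{i_q+k_q}}. Then P_0^{2r-1}(m) = Σ_{k ∈ {0,…,r−1}ⁿ} (Π_{q=1}^n (1/2^{2r-1})·binom(2r, 2k_q+1)) ·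 P_k^r(m); that is, the multivariate optimal weights are the products of the one-dimensional optimal weights. -/
open Finset

noncomputable def lagBasis {ι : Type*} [DecidableEq ι] (s : Finset ι) (x : ι → ℝ) (y : ℝ)
    (l : ι) : ℝ :=
  ∏ k ∈ s.erase l, (y - x k) / (x l - x k)

theorem tensorLagEval_eq_sum_lagBasis (n : ℕ) (s : Fin n → Finset ℤ) (x : Fin n → ℤ → ℝ)
    (f : (Fin n → ℝ) → ℝ) (y : Fin n → ℝ) :
    tensorLagEval n s x f y = ∑ l ∈ Fintype.piFinset s,
      f (fun q => x q (l q)) * ∏ q, lagBasis (s q) (x q) (y q) (l q) :=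
  rfl

theorem tensorLagEval_eq_sum_of_lagBasis_eq_sum {n : ℕ} {ι : Type*} (S : Fin n → Finset ℤ)
    (s : Fin n → ι → Finset ℤ) (K : Fin n → Finset ι) (w : Fin n → ι → ℝ)
    (x : Fin n → ℤ → ℝ) (f : (Fin n → ℝ) → ℝ) (y : Fin n → ℝ)
    (hsub : ∀ q, ∀ k ∈ K q, s q k ⊆ S q)
    (hbasis : ∀ q, ∀ l ∈ S q, lagBasis (S q) (x q) (y q) l =
      ∑ k ∈ K q, w q k * if l ∈ s q k then lagBasis (s q k) (x q) (y q) l else 0) :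
    tensorLagEval n S x f y = ∑ κ ∈ Fintype.piFinset K,
      (∏ q, w q (κ q)) * tensorLagEval n (fun q => s q (κ q)) x f y := by
  have hterm : ∀ κ ∈ Fintype.piFinset K,
      (∏ q, w q (κ q)) * tensorLagEval n (fun q => s q (κ q)) x f y =
        ∑ l ∈ Fintype.piFinset S, f (fun q => x q (l q)) * ∏ q, (w q (κ q) *
          if l q ∈ s q (κ q) then lagBasis (s q (κ q)) (x q) (y q) (l q) else 0) := by
    intro κ hκ
    have hsubκ : Fintype.piFinset (fun q => s q (κ q)) ⊆ Fintype.piFinset S :=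
      Fintype.piFinset_subset _ _ fun q => hsub q _ (Fintype.mem_piFinset.1 hκ q)
    simp_rw [mul_ite, mul_zero, prod_ite_zero, mem_univ, true_imp_iff, ← Fintype.mem_piFinset,
      mul_ite, mul_zero, sum_ite_mem, inter_eq_right.2 hsubκ, tensorLagEval_eq_sum_lagBasis,
      mul_sum, prod_mul_distrib]
    exact sum_congr rfl fun l _ => by ring
  rw [sum_congr rfl hterm, sum_comm, tensorLagEval_eq_sum_lagBasis]
  refine sum_congr rfl fun l hl => ?_
  rw [← mul_sum, prod_congr rfl fun q _ => hbasis q (l q) (Fintype.mem_piFinset.1 hl q),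
    prod_univ_sum]

theorem lagBasis_map {ι κ : Type*} [DecidableEq ι] [DecidableEq κ] (e : ι ↪ κ) (s : Finset ι)
    (x : κ → ℝ) (y : ℝ) (l : ι) :
    lagBasis (s.map e) x y (e l) = lagBasis s (x ∘ e) y l := by
  rw [lagBasis, ← map_erase, prod_map]
  rfl

theorem lagBasis_affine {ι : Type*} [DecidableEq ι] (s : Finset ι) (z : ι → ℝ) {a h : ℝ}
    (hh : h ≠ 0) (y : ℝ) (l : ι) :
    lagBasis s (fun k => a + z k * h) y l = lagBasis s z ((y - a) / h) l := by
  refine prod_congr rfl fun k _ => ?_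
  rw [show y - (a + z k * h) = ((y - a) / h - z k) * h by field_simp; ring,
    show a + z l * h - (a + z k * h) = (z l - z k) * h by ring, mul_div_mul_right _ _ hh]

section

open Nat

theorem prod_range_add_half (m : ℕ) :
    ∏ t ∈ range m, ((t : ℝ) + 1 / 2) = (2 * m)! / (4 ^ m * m !) := by
  induction m with
  | zero => simp
  | succ m ih =>
    rw [prod_range_succ, ih, show 2 * (m + 1) = 2 * m + 1 + 1 by ring, factorial_succ,
      factorial_succ, factorial_succ]
    push_cast
    field_simp
    ring

theorem prod_range_sub_half (A B : ℕ) :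
    ∏ t ∈ range (A + B + 1), ((A : ℝ) - 1 / 2 - t) =
      (-1) ^ (B + 1) * ((2 * A)! / (4 ^ A * A !)) *
        ((2 * (B + 1))! / (4 ^ (B + 1) * (B + 1)!)) := by
  have hleft : ∏ t ∈ range A, ((A : ℝ) - 1 / 2 - t) = ∏ t ∈ range A, ((t : ℝ) + 1 / 2) := by
    rw [← prod_range_reflect (fun t : ℕ => (t : ℝ) + 1 / 2) A]
    refine prod_congr rfl fun t ht => ?_
    rw [mem_range] at ht
    rw [Nat.cast_sub (by omega), Nat.cast_sub (by omega)]
    push_cast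
    ring
  have hright : ∏ t ∈ Ico A (A + B + 1), ((A : ℝ) - 1 / 2 - t) =
      (-1) ^ (B + 1) * ∏ t ∈ range (B + 1), ((t : ℝ) + 1 / 2) := by
    rw [prod_Ico_eq_prod_range, show A + B + 1 - A = B + 1 by omega]
    calc _ = ∏ t ∈ range (B + 1), -((t : ℝ) + 1 / 2) :=
          prod_congr rfl fun t _ => by push_cast; ring
      _ = _ := by rw [prod_neg, card_range]
  rw [← prod_range_mul_prod_Ico _ (by omega : A ≤ A + B + 1), hleft, hright,
    prod_range_add_half, prod_range_add_half]
  ring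

theorem prod_erase_range_sub (N p : ℕ) (hp : p ≤ N) :
    ∏ t ∈ (range (N + 1)).erase p, ((p : ℝ) - t) = (-1) ^ (N - p) * p ! * (N - p)! := by
  have hsplit : (range (N + 1)).erase p = range p ∪ Ico (p + 1) (N + 1) := by
    ext t; simp only [mem_erase, mem_range, mem_union, mem_Ico]; omega
  have hleft : ∏ t ∈ range p, ((p : ℝ) - t) = p ! := by
    rw [← descPochhammer_eval_eq_prod_range, descPochhammer_eval_eq_descFactorial,
      descFactorial_self]
  have hright : ∏ t ∈ Ico (p + 1) (N + 1), ((p : ℝ) - t) = (-1) ^ (N - p) * (N - p)! := by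
    rw [prod_Ico_eq_prod_range, show N + 1 - (p + 1) = N - p by omega,
      ← prod_range_add_one_eq_factorial, cast_prod]
    calc _ = ∏ t ∈ range (N - p), -(((t + 1 : ℕ) : ℝ)) :=
          prod_congr rfl fun t _ => by push_cast; ring
      _ = _ := by rw [prod_neg, card_range]
  rw [hsplit, prod_union (disjoint_left.2 fun t h1 h2 => by simp at h1 h2; omega), hleft, hright]
  ring

theorem lagBasis_range_sub_half (A B p : ℕ) (hp : p ≤ A + B) :
    lagBasis (range (A + B + 1)) (↑) ((A : ℝ) - 1 / 2) p =
      (-1) ^ (A + p + 1) * ((2 * A)! / (4 ^ A * A !)) *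
        ((2 * (B + 1))! / (4 ^ (B + 1) * (B + 1)!)) /
          (((A : ℝ) - 1 / 2 - p) * p ! * (A + B - p)!) := by
  have hc : (A : ℝ) - 1 / 2 - p ≠ 0 := by
    intro h
    have : ((2 * A : ℕ) : ℝ) = (2 * p + 1 : ℕ) := by push_cast; linarith
    norm_cast at this
    omega
  have hnum : ∏ t ∈ (range (A + B + 1)).erase p, ((A : ℝ) - 1 / 2 - t) =
      (∏ t ∈ range (A + B + 1), ((A : ℝ) - 1 / 2 - t)) / ((A : ℝ) - 1 / 2 - p) := by
    rw [← prod_erase_mul _ (fun t : ℕ => (A : ℝ) - 1 / 2 - t)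
      (mem_range.2 (by omega : p < A + B + 1)), mul_div_cancel_right₀ _ hc]
  have hsign : (-1 : ℝ) ^ (B + 1) = (-1) ^ (A + p + 1) * (-1) ^ (A + B - p) := by
    rw [← pow_add, show A + p + 1 + (A + B - p) = B + 1 + 2 * A by omega, pow_add _ (B + 1),
      pow_mul]
    norm_num
  rw [lagBasis, prod_div_distrib, hnum, prod_range_sub_half, prod_erase_range_sub _ _ hp, hsign]
  field_simp

theorem lagBasis_Icc_sub_half (i : ℤ) (A B p : ℕ) (hp : p ≤ A + B) :
    lagBasis (Icc (i - A) (i + B)) (↑) ((i : ℝ) - 1 / 2) (i - A + p) =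
      (-1) ^ (A + p + 1) * ((2 * A)! / (4 ^ A * A !)) *
        ((2 * (B + 1))! / (4 ^ (B + 1) * (B + 1)!)) /
          (((A : ℝ) - 1 / 2 - p) * p ! * (A + B - p)!) := by
  set e : ℕ ↪ ℤ := Nat.castEmbedding.trans (addLeftEmbedding (i - A))
  have hIcc : Icc (i - A) (i + B) = (range (A + B + 1)).map e := by
    rw [Int.Icc_eq_finset_map, show (i + B + 1 - (i - A)).toNat = A + B + 1 by omega]
  have hnodes : ((↑) : ℤ → ℝ) ∘ e = fun t : ℕ => ((i - A : ℤ) : ℝ) + (t : ℝ) * 1 := by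
    funext t; simp [e]
  rw [hIcc, show i - A + (p : ℤ) = e p from rfl, lagBasis_map, hnodes,
    lagBasis_affine _ _ one_ne_zero, ← lagBasis_range_sub_half A B p hp]
  congr 1
  push_cast
  ring

noncomputable def optimalWeight (r k : ℕ) : ℝ :=
  (choose (2 * r) (2 * k + 1) : ℝ) / 2 ^ (2 * r - 1)

theorem optimalWeight_mul_halfPochhammer (r k : ℕ) (hk : k < r) :
    optimalWeight r k * ((2 * (r - k))! / (4 ^ (r - k) * (r - k)!)) *
        ((2 * (k + 1))! / (4 ^ (k + 1) * (k + 1)!)) * (2 * r - 1)! =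
      ((2 * r)! / (4 ^ r * r !)) ^ 2 * choose (r - 1) k * r ! := by
  obtain ⟨m, rfl⟩ : ∃ m, r = k + m + 1 := ⟨r - k - 1, by omega⟩
  rw [optimalWeight, Nat.cast_choose ℝ (by omega : 2 * k + 1 ≤ 2 * (k + m + 1)),
    Nat.cast_choose ℝ (by omega : k ≤ k + m + 1 - 1),
    show k + m + 1 - k = m + 1 by omega, show 2 * (k + m + 1) - 1 = 2 * k + 2 * m + 1 by omega,
    show k + m + 1 - 1 = k + m by omega, show 2 * (k + m + 1) - (2 * k + 1) = 2 * m + 1 by omega,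
    show k + m - k = m by omega, show 2 * (k + m + 1) = 2 * k + 2 * m + 1 + 1 by ring,
    show 2 * (m + 1) = 2 * m + 1 + 1 by ring, show 2 * (k + 1) = 2 * k + 1 + 1 by ring,
    factorial_succ (2 * k + 2 * m + 1), factorial_succ (2 * m + 1), factorial_succ (2 * k + 1),
    factorial_succ (k + m), factorial_succ m, factorial_succ k]
  push_cast
  field_simp
  simp only [show (4 : ℝ) = 2 ^ 2 by norm_num, ← pow_mul]
  ring

theorem optimalWeight_mul_lagBasis_Icc (r k p : ℕ) (i : ℤ) (hk : k < r) (hkp : k ≤ p)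
    (hpk : p ≤ k + r) :
    optimalWeight r k * lagBasis (Icc (i - r + k) (i + k)) (↑) ((i : ℝ) - 1 / 2) (i - r + p) *
        choose (2 * r - 1) p =
      lagBasis (Icc (i - r) (i + r - 1)) (↑) ((i : ℝ) - 1 / 2) (i - r + p) *
        choose (r - 1) k * choose r (p - k) := by
  -- an opaque `c` lets `linear_combination` treat `c⁻¹` as an atom
  obtain ⟨c, hc⟩ : ∃ c : ℝ, (r : ℝ) - 1 / 2 - p = c := ⟨_, rfl⟩
  have hc' : ((r - k : ℕ) : ℝ) - 1 / 2 - (p - k : ℕ) = c := by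
    rw [Nat.cast_sub hk.le, Nat.cast_sub hkp, ← hc]
    ring
  have hsign : (-1 : ℝ) ^ (r - k + (p - k) + 1) = (-1) ^ (r + p + 1) := by
    rw [show r + p + 1 = r - k + (p - k) + 1 + 2 * k by omega, pow_add _ _ (2 * k), pow_mul]
    norm_num
  rw [show i + r - 1 = i + ((r - 1 : ℕ) : ℤ) by omega,
    lagBasis_Icc_sub_half i r (r - 1) p (by omega), Nat.sub_add_cancel (by omega : 1 ≤ r),
    show r + (r - 1) - p = 2 * r - 1 - p by omega, hc,
    show i - r + k = i - ((r - k : ℕ) : ℤ) by omega,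
    show i - r + p = i - ((r - k : ℕ) : ℤ) + ((p - k : ℕ) : ℤ) by omega,
    lagBasis_Icc_sub_half i (r - k) k (p - k) (by omega), hsign, hc',
    show r - k + k - (p - k) = r - (p - k) by omega,
    cast_choose ℝ (by omega : p ≤ 2 * r - 1), cast_choose ℝ (by omega : p - k ≤ r)]
  linear_combination
    ((-1) ^ (r + p + 1) / (c * (p - k)! * (r - (p - k))! * p ! * (2 * r - 1 - p)!)) *
      optimalWeight_mul_halfPochhammer r k hk

theorem sum_range_ite_choose_mul_choose (m n P : ℕ) :
    ∑ k ∈ range (m + 1), (if k ≤ P ∧ P ≤ k + n then m.choose k * n.choose (P - k) else 0) =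
      (m + n).choose P := by
  calc _ = ∑ k ∈ range (m + 1) with k ≤ P ∧ P ≤ k + n, m.choose k * n.choose (P - k) :=
        (sum_filter _ _).symm
    _ = ∑ k ∈ range (P + 1) with k ≤ m ∧ P ≤ k + n, m.choose k * n.choose (P - k) := by
        congr 1
        ext k
        simp only [mem_filter, mem_range]
        omega
    _ = ∑ k ∈ range (P + 1), m.choose k * n.choose (P - k) := by
        refine sum_filter_of_ne fun k _ hk => ⟨?_, ?_⟩
        · by_contra h
          simp [Nat.choose_eq_zero_of_lt (by omega : m < k)] at hk
        · by_contra h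
          simp [Nat.choose_eq_zero_of_lt (by omega : n < P - k)] at hk
    _ = (m + n).choose P := by
        rw [Nat.add_choose_eq, Nat.sum_antidiagonal_eq_sum_range_succ_mk]

theorem lagBasis_Icc_eq_sum_optimalWeight (r : ℕ) (i l : ℤ)
    (hl : l ∈ Icc (i - r) (i + r - 1)) :
    lagBasis (Icc (i - r) (i + r - 1)) (↑) ((i : ℝ) - 1 / 2) l =
      ∑ k ∈ range r, optimalWeight r k *
        if l ∈ Icc (i - r + k) (i + k) then
          lagBasis (Icc (i - r + k) (i + k)) (↑) ((i : ℝ) - 1 / 2) l else 0 := by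
  rw [mem_Icc] at hl
  obtain ⟨p, rfl⟩ : ∃ p : ℕ, l = i - r + p := ⟨(l - (i - r)).toNat, by omega⟩
  have hr : 1 ≤ r := by omega
  have hC : (choose (2 * r - 1) p : ℝ) ≠ 0 := by exact_mod_cast (choose_pos (by omega)).ne'
  have hvandermonde : ∑ k ∈ range r,
      (if k ≤ p ∧ p ≤ k + r then (choose (r - 1) k * choose r (p - k) : ℝ) else 0) =
        choose (2 * r - 1) p := by
    have := sum_range_ite_choose_mul_choose (r - 1) r p
    rw [Nat.sub_add_cancel hr, show r - 1 + r = 2 * r - 1 by omega] at this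
    exact_mod_cast this
  rw [← div_mul_cancel₀ (lagBasis _ _ _ _) hC]
  nth_rw 2 [← hvandermonde]
  rw [mul_sum]
  refine sum_congr rfl fun k hk => ?_
  rw [mem_range] at hk
  have hmem : i - r + p ∈ Icc (i - r + k) (i + k) ↔ k ≤ p ∧ p ≤ k + r := by
    rw [mem_Icc]
    omega
  by_cases h : k ≤ p ∧ p ≤ k + r
  · rw [if_pos h, if_pos (hmem.2 h), div_mul_eq_mul_div, div_eq_iff hC,
      optimalWeight_mul_lagBasis_Icc r k p i hk h.1 h.2]
    ring
  · rw [if_neg h, if_neg (mt hmem.1 h), mul_zero, mul_zero]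

end

theorem stmt13_general (n r : ℕ)
    (a h : Fin n → ℝ) (hh : ∀ q, 0 < h q) (i : Fin n → ℤ)
    (x : Fin n → ℤ → ℝ) (hx : ∀ (q : Fin n) (m : ℤ), x q m = a q + (m : ℝ) * h q)
    (f : (Fin n → ℝ) → ℝ) (mid : Fin n → ℝ)
    (hmid : ∀ q : Fin n, mid q = a q + ((i q : ℝ) - 1 / 2) * h q) :
    tensorLagEval n (fun q => Finset.Icc (i q - r) (i q + r - 1)) x f mid =
      ∑ k ∈ Fintype.piFinset (fun _ : Fin n => Finset.range r),
        (∏ q : Fin n, ((Nat.choose (2 * r) (2 * k q + 1) : ℝ) / 2 ^ (2 * r - 1))) *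
          tensorLagEval n (fun q => Finset.Icc (i q - r + k q) (i q + k q)) x f mid := by
  have hnormalize : ∀ q (s : Finset ℤ) (l : ℤ),
      lagBasis s (x q) (mid q) l = lagBasis s (↑) ((i q : ℝ) - 1 / 2) l := by
    intro q s l
    rw [show x q = fun m : ℤ => a q + (m : ℝ) * h q from funext (hx q),
      lagBasis_affine s _ (hh q).ne', hmid q, add_sub_cancel_left,
      mul_div_cancel_right₀ _ (hh q).ne']
  refine tensorLagEval_eq_sum_of_lagBasis_eq_sum _ (fun q (k : ℕ) => Icc (i q - r + k) (i q + k))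
    (fun _ => range r) (fun _ => optimalWeight r) x f mid
    (fun q k hk => Icc_subset_Icc (by omega) (by rw [mem_range] at hk; omega)) fun q l hl => ?_
  simp only [hnormalize q]
  exact lagBasis_Icc_eq_sum_optimalWeight r (i q) l hl

theorem stmt13 (n r : ℕ) (hn : 1 ≤ n) (hr : 1 ≤ r)
    (a h : Fin n → ℝ) (hh : ∀ q, 0 < h q) (i : Fin n → ℤ)
    (x : Fin n → ℤ → ℝ) (hx : ∀ (q : Fin n) (m : ℤ), x q m = a q + (m : ℝ) * h q)
    (f : (Fin n → ℝ) → ℝ) (mid : Fin n → ℝ)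
    (hmid : ∀ q : Fin n, mid q = a q + ((i q : ℝ) - 1 / 2) * h q) :
    tensorLagEval n (fun q => Finset.Icc (i q - r) (i q + r - 1)) x f mid =
      ∑ k ∈ Fintype.piFinset (fun _ : Fin n => Finset.range r),
        (∏ q : Fin n, ((Nat.choose (2 * r) (2 * k q + 1) : ℝ) / 2 ^ (2 * r - 1))) *
          tensorLagEval n (fun q => Finset.Icc (i q - r + k q) (i q + k q)) x f mid :=
  stmt13_general n r a h hh i x hx f mid hmid
end

section
/- Let r ≥ 1 be an integer and A, M > 0 constants. Then there exists a constant C > 0, depending only on r, A, and M, with the following property. Let [c,d] be an interval with h := d − c satisfying 0 < h ≤ 1, let f : ℝ → ℝ be r times continuously differentiable on [c,d] with |f^{(l)}(x)| ≤ M for all x ∈ [c,d] and all l = 0, …, r, and let p be a polynomial such that |f^{(l)}(x) − p^{(l)}(x)| ≤ A·h^{r+1−l} for all x ∈ [c,d] and all l = 0, …, r. Then |I_{[c,d]}(f) − I_{[c,d]}(p)| ≤ C·h^{r+1}, where I_{[c,d]}(g) = Σ_{l=1}^{r} h^{2l−1} ∫_c^d (g^{(l)}(x))² dx. -/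
/-!
On each derivative order `l`, write `F = f⁽ˡ⁾`, `P = p⁽ˡ⁾` and `e = A h^(r+1-l)`. Pointwise
`|F² - P²| = |F - P| |2F - (F - P)| ≤ e (2M + e)`, so the `l`-th summands of the two indicators
differ by at most `h^(2l-1) · e (2M + A) · h = A (2M + A) h^(r+l+1) ≤ A (2M + A) h^(r+1)`.
Summing over the `r` orders gives the constant `C = r A (2M + A)`.
-/

open Set

lemma abs_sq_sub_sq_le {a b M e : ℝ} (ha : |a| ≤ M) (hab : |a - b| ≤ e) :
    |a ^ 2 - b ^ 2| ≤ e * (2 * M + e) := by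
  have hsum : |a + b| ≤ 2 * M + e := by
    calc |a + b| = |2 * a - (a - b)| := by ring_nf
      _ ≤ |2 * a| + |a - b| := abs_sub _ _
      _ ≤ 2 * M + e := by rw [abs_mul, abs_two]; linarith
  rw [sq_sub_sq, abs_mul, mul_comm]
  exact mul_le_mul hab hsum (abs_nonneg _) ((abs_nonneg _).trans hab)

lemma abs_integral_sq_sub_integral_sq_le {F G : ℝ → ℝ} {c d M e : ℝ} (hcd : c ≤ d)
    (hF : ContinuousOn F (Icc c d)) (hG : ContinuousOn G (Icc c d))
    (hFM : ∀ x ∈ Icc c d, |F x| ≤ M) (hFG : ∀ x ∈ Icc c d, |F x - G x| ≤ e) :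
    |(∫ x in c..d, F x ^ 2) - ∫ x in c..d, G x ^ 2| ≤ e * (2 * M + e) * (d - c) := by
  rw [← intervalIntegral.integral_sub ((hF.fun_pow 2).intervalIntegrable_of_Icc hcd)
    ((hG.fun_pow 2).intervalIntegrable_of_Icc hcd)]
  have hpt : ∀ x ∈ uIoc c d, ‖F x ^ 2 - G x ^ 2‖ ≤ e * (2 * M + e) := fun x hx => by
    rw [uIoc_of_le hcd] at hx
    exact abs_sq_sub_sq_le (hFM x (Ioc_subset_Icc_self hx)) (hFG x (Ioc_subset_Icc_self hx))
  simpa only [Real.norm_eq_abs, abs_of_nonneg (sub_nonneg.2 hcd)] using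
    intervalIntegral.norm_integral_le_of_norm_le_const hpt

lemma abs_pow_mul_integral_sq_sub_le {F G : ℝ → ℝ} {c d A M : ℝ} {l r : ℕ} (hcd : c ≤ d)
    (hh : d - c ≤ 1) (hl : 1 ≤ l) (hlr : l ≤ r) (hA : 0 ≤ A) (hM : 0 ≤ M)
    (hF : ContinuousOn F (Icc c d)) (hG : ContinuousOn G (Icc c d))
    (hFM : ∀ x ∈ Icc c d, |F x| ≤ M)
    (hFG : ∀ x ∈ Icc c d, |F x - G x| ≤ A * (d - c) ^ (r + 1 - l)) :
    |(d - c) ^ (2 * l - 1) * (∫ x in c..d, F x ^ 2) - (d - c) ^ (2 * l - 1) * ∫ x in c..d, G x ^ 2|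
      ≤ A * (2 * M + A) * (d - c) ^ (r + 1) := by
  set h := d - c
  have h0 : 0 ≤ h := sub_nonneg.2 hcd
  have he : A * h ^ (r + 1 - l) ≤ A := mul_le_of_le_one_right hA (pow_le_one₀ h0 hh)
  rw [← mul_sub, abs_mul, abs_of_nonneg (pow_nonneg h0 _)]
  calc h ^ (2 * l - 1) * |(∫ x in c..d, F x ^ 2) - ∫ x in c..d, G x ^ 2|
      ≤ h ^ (2 * l - 1) * (A * h ^ (r + 1 - l) * (2 * M + A) * h) := by
        gcongr
        refine (abs_integral_sq_sub_integral_sq_le hcd hF hG hFM hFG).trans ?_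
        gcongr
    _ = A * (2 * M + A) * h ^ ((r + 1) + l) := by
        rw [show (r + 1) + l = (2 * l - 1) + (r + 1 - l) + 1 by omega, pow_succ, pow_add]
        ring
    _ ≤ A * (2 * M + A) * h ^ (r + 1) := by
        have : 0 ≤ A * (2 * M + A) := by positivity
        exact mul_le_mul_of_nonneg_left (pow_le_pow_of_le_one h0 hh (Nat.le_add_right _ _)) this

lemma abs_sum_sub_sum_le_card_mul {ι : Type*} {s : Finset ι} {a b : ι → ℝ} {B : ℝ}
    (hab : ∀ i ∈ s, |a i - b i| ≤ B) : |∑ i ∈ s, a i - ∑ i ∈ s, b i| ≤ s.card * B := by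
  rw [← Finset.sum_sub_distrib, ← nsmul_eq_mul]
  exact (Finset.abs_sum_le_sum_abs _ _).trans (Finset.sum_le_card_nsmul _ _ _ hab)

theorem stmt18 (r : ℕ) (hr : 1 ≤ r) (A M : ℝ) (hA : 0 < A) (hM : 0 < M) :
    ∃ C > 0, ∀ (c d : ℝ) (f : ℝ → ℝ) (p : Polynomial ℝ),
      c < d → d - c ≤ 1 →
      ContDiffOn ℝ r f (Set.Icc c d) →
      (∀ l : ℕ, l ≤ r → ∀ x ∈ Set.Icc c d,
        |iteratedDerivWithin l f (Set.Icc c d) x| ≤ M) →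
      (∀ l : ℕ, l ≤ r → ∀ x ∈ Set.Icc c d,
        |iteratedDerivWithin l f (Set.Icc c d) x -
            iteratedDerivWithin l (fun y => Polynomial.eval y p) (Set.Icc c d) x|
          ≤ A * (d - c) ^ (r + 1 - l)) →
      |(∑ l ∈ Finset.Icc 1 r, (d - c) ^ (2 * l - 1) *
            ∫ x in c..d, (iteratedDerivWithin l f (Set.Icc c d) x) ^ 2) -
          ∑ l ∈ Finset.Icc 1 r, (d - c) ^ (2 * l - 1) *
            ∫ x in c..d, (iteratedDerivWithin l (fun y => Polynomial.eval y p) (Set.Icc c d) x) ^ 2|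
        ≤ C * (d - c) ^ (r + 1) := by
  have hr0 : (0 : ℝ) < r := by exact_mod_cast hr
  refine ⟨r * (A * (2 * M + A)), by positivity, ?_⟩
  intro c d f p hcd hh hf hfM hfp
  have hud : UniqueDiffOn ℝ (Icc c d) := uniqueDiffOn_Icc hcd
  have hp : ContDiffOn ℝ r (fun y => p.eval y) (Icc c d) := by
    simpa using (p.contDiff_aeval (𝕜 := ℝ) r).contDiffOn
  refine (abs_sum_sub_sum_le_card_mul (B := A * (2 * M + A) * (d - c) ^ (r + 1))
    fun l hl => ?_).trans_eq ?_
  · obtain ⟨hl, hlr⟩ := Finset.mem_Icc.1 hl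
    exact abs_pow_mul_integral_sq_sub_le hcd.le hh hl hlr hA.le hM.le
      (hf.continuousOn_iteratedDerivWithin (by exact_mod_cast hlr) hud)
      (hp.continuousOn_iteratedDerivWithin (by exact_mod_cast hlr) hud) (hfM l hlr) (hfp l hlr)
  · rw [Nat.card_Icc, Nat.add_sub_cancel]
    ring
end

section
/- Let r ≥ 1 be an integer and A, M > 0 constants. Then there exists a constant C > 0, depending only on r, A, and M, with the following property. Let [c,d] be an interval with h := d − c satisfying 0 < h ≤ 1, let f : ℝ → ℝ be r times continuously differentiable on [c,d] with |f^{(l)}(x)| ≤ M for all x ∈ [c,d] and all l = 0, …, r, and let p and q be polynomials such that |f^{(l)}(x) − p^{(l)}(x)| ≤ A·h^{r+1−l} and |f^{(l)}(x) − q^{(l)}(x)| ≤ A·h^{r+1−l} for all x ∈ [c,d] and all l = 0, …, r. Then the smoothness indicators of p and q on [c,d] satisfy |I_{[c,d]}(p) − I_{[c,d]}(q)| ≤ C·h^{r+1}, where I_{[c,d]}(g) = Σ_{l=1}^{r} h^{2l−1} ∫_c^d (g^{(l)}(x))² dx. -/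
private lemma polyContDiff (p : Polynomial ℝ) (n : ℕ) :
    ContDiff ℝ n fun x : ℝ => Polynomial.eval x p := by
  induction p using Polynomial.induction_on' with
  | add p q hp hq => simpa using hp.add hq
  | monomial k a =>
      simpa [Polynomial.eval_monomial] using contDiff_const.mul (contDiff_id.pow k)

theorem stmt19 (r : ℕ) (hr : 1 ≤ r) (A M : ℝ) (hA : 0 < A) (hM : 0 < M) :
    ∃ C > 0, ∀ (c d : ℝ) (f : ℝ → ℝ) (p q : Polynomial ℝ),
      c < d → d - c ≤ 1 →
      ContDiffOn ℝ r f (Set.Icc c d) →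
      (∀ l : ℕ, l ≤ r → ∀ x ∈ Set.Icc c d,
        |iteratedDerivWithin l f (Set.Icc c d) x| ≤ M) →
      (∀ l : ℕ, l ≤ r → ∀ x ∈ Set.Icc c d,
        |iteratedDerivWithin l f (Set.Icc c d) x -
            iteratedDerivWithin l (fun y => Polynomial.eval y p) (Set.Icc c d) x|
          ≤ A * (d - c) ^ (r + 1 - l)) →
      (∀ l : ℕ, l ≤ r → ∀ x ∈ Set.Icc c d,
        |iteratedDerivWithin l f (Set.Icc c d) x -
            iteratedDerivWithin l (fun y => Polynomial.eval y q) (Set.Icc c d) x|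
          ≤ A * (d - c) ^ (r + 1 - l)) →
      |(∑ l ∈ Finset.Icc 1 r, (d - c) ^ (2 * l - 1) *
            ∫ x in c..d, (iteratedDerivWithin l (fun y => Polynomial.eval y p) (Set.Icc c d) x) ^ 2) -
          ∑ l ∈ Finset.Icc 1 r, (d - c) ^ (2 * l - 1) *
            ∫ x in c..d, (iteratedDerivWithin l (fun y => Polynomial.eval y q) (Set.Icc c d) x) ^ 2|
        ≤ C * (d - c) ^ (r + 1) := by
  refine ⟨4 * A * (M + A) * r, by positivity, ?_⟩
  intro c d f p q hcd hd1 hf hfM hp hq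
  set h : ℝ := d - c with hhdef
  have hh : 0 < h := by simp only [hhdef]; linarith
  have hcd' : c ≤ d := hcd.le
  have hud : UniqueDiffOn ℝ (Set.Icc c d) := uniqueDiffOn_Icc hcd
  set P := fun (l : ℕ) => iteratedDerivWithin l (fun y => Polynomial.eval y p) (Set.Icc c d)
    with hP
  set Q := fun (l : ℕ) => iteratedDerivWithin l (fun y => Polynomial.eval y q) (Set.Icc c d)
    with hQ
  have contP : ∀ l : ℕ, ContinuousOn (P l) (Set.Icc c d) := fun l =>
    ((polyContDiff p l).contDiffOn).continuousOn_iteratedDerivWithin le_rfl hud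
  have contQ : ∀ l : ℕ, ContinuousOn (Q l) (Set.Icc c d) := fun l =>
    ((polyContDiff q l).contDiffOn).continuousOn_iteratedDerivWithin le_rfl hud
  have intP : ∀ l : ℕ, IntervalIntegrable (fun x => (P l x) ^ 2) MeasureTheory.volume c d := by
    intro l
    apply ContinuousOn.intervalIntegrable
    rw [Set.uIcc_of_le hcd']
    exact (contP l).pow 2
  have intQ : ∀ l : ℕ, IntervalIntegrable (fun x => (Q l x) ^ 2) MeasureTheory.volume c d := by
    intro l
    apply ContinuousOn.intervalIntegrable
    rw [Set.uIcc_of_le hcd']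
    exact (contQ l).pow 2
  rw [← Finset.sum_sub_distrib]
  have key : ∀ l ∈ Finset.Icc 1 r,
      |h ^ (2 * l - 1) * (∫ x in c..d, (P l x) ^ 2) -
        h ^ (2 * l - 1) * (∫ x in c..d, (Q l x) ^ 2)| ≤ 4 * A * (M + A) * h ^ (r + 1) := by
    intro l hl
    rw [Finset.mem_Icc] at hl
    obtain ⟨hl1, hlr⟩ := hl
    have hpow1 : h ^ (r + 1 - l) ≤ 1 := pow_le_one₀ hh.le hd1
    have bound : ∀ x ∈ Set.Icc c d,
        |(P l x) ^ 2 - (Q l x) ^ 2| ≤ 4 * A * (M + A) * h ^ (r + 1 - l) := by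
      intro x hx
      have hF := hfM l hlr x hx
      have hFP := hp l hlr x hx
      have hFQ := hq l hlr x hx
      have hPQ : |P l x - Q l x| ≤ 2 * (A * h ^ (r + 1 - l)) := by
        have := abs_sub (iteratedDerivWithin l f (Set.Icc c d) x - P l x)
          (iteratedDerivWithin l f (Set.Icc c d) x - Q l x)
        calc |P l x - Q l x|
            = |(iteratedDerivWithin l f (Set.Icc c d) x - Q l x) -
              (iteratedDerivWithin l f (Set.Icc c d) x - P l x)| := by ring_nf
          _ ≤ |iteratedDerivWithin l f (Set.Icc c d) x - Q l x| +
              |iteratedDerivWithin l f (Set.Icc c d) x - P l x| := abs_sub _ _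
          _ ≤ 2 * (A * h ^ (r + 1 - l)) := by linarith
      have hPb : |P l x| ≤ M + A := by
        have h3 := abs_sub_abs_le_abs_sub (P l x) (iteratedDerivWithin l f (Set.Icc c d) x)
        rw [abs_sub_comm] at h3
        nlinarith [mul_le_mul_of_nonneg_left hpow1 hA.le]
      have hQb : |Q l x| ≤ M + A := by
        have h3 := abs_sub_abs_le_abs_sub (Q l x) (iteratedDerivWithin l f (Set.Icc c d) x)
        rw [abs_sub_comm] at h3
        nlinarith [mul_le_mul_of_nonneg_left hpow1 hA.le]
      have factor : (P l x) ^ 2 - (Q l x) ^ 2 = (P l x - Q l x) * (P l x + Q l x) := by ring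
      rw [factor, abs_mul]
      have hsum : |P l x + Q l x| ≤ 2 * (M + A) := by
        calc |P l x + Q l x| ≤ |P l x| + |Q l x| := abs_add_le _ _
          _ ≤ 2 * (M + A) := by linarith
      calc |P l x - Q l x| * |P l x + Q l x|
          ≤ (2 * (A * h ^ (r + 1 - l))) * (2 * (M + A)) := by
            apply mul_le_mul hPQ hsum (abs_nonneg _)
            positivity
        _ = 4 * A * (M + A) * h ^ (r + 1 - l) := by ring
    have intdiff : (∫ x in c..d, (P l x) ^ 2) - (∫ x in c..d, (Q l x) ^ 2)
        = ∫ x in c..d, ((P l x) ^ 2 - (Q l x) ^ 2) :=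
      (intervalIntegral.integral_sub (intP l) (intQ l)).symm
    have hintbound : |∫ x in c..d, ((P l x) ^ 2 - (Q l x) ^ 2)|
        ≤ 4 * A * (M + A) * h ^ (r + 1 - l) * h := by
      have := intervalIntegral.norm_integral_le_of_norm_le_const
        (C := 4 * A * (M + A) * h ^ (r + 1 - l))
        (f := fun x => (P l x) ^ 2 - (Q l x) ^ 2) (a := c) (b := d) ?_
      · rw [Real.norm_eq_abs] at this
        have habs : |d - c| = h := abs_of_pos hh
        calc |∫ x in c..d, ((P l x) ^ 2 - (Q l x) ^ 2)|
            ≤ 4 * A * (M + A) * h ^ (r + 1 - l) * |d - c| := this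
          _ = 4 * A * (M + A) * h ^ (r + 1 - l) * h := by rw [habs]
      · intro x hx
        rw [Set.uIoc_of_le hcd'] at hx
        exact (Real.norm_eq_abs _) ▸ bound x ⟨hx.1.le, hx.2⟩
    rw [← mul_sub, abs_mul, intdiff, abs_pow, abs_of_pos hh]
    calc h ^ (2 * l - 1) * |∫ x in c..d, ((P l x) ^ 2 - (Q l x) ^ 2)|
        ≤ h ^ (2 * l - 1) * (4 * A * (M + A) * h ^ (r + 1 - l) * h) := by
          apply mul_le_mul_of_nonneg_left hintbound (by positivity)
      _ = 4 * A * (M + A) * h ^ ((2 * l - 1) + (r + 1 - l) + 1) := by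
          rw [pow_add, pow_add, pow_one]; ring
      _ ≤ 4 * A * (M + A) * h ^ (r + 1) := by
          apply mul_le_mul_of_nonneg_left _ (by positivity)
          exact pow_le_pow_of_le_one hh.le hd1 (by omega)
  calc |∑ l ∈ Finset.Icc 1 r, (h ^ (2 * l - 1) * (∫ x in c..d, (P l x) ^ 2) -
          h ^ (2 * l - 1) * (∫ x in c..d, (Q l x) ^ 2))|
      ≤ ∑ l ∈ Finset.Icc 1 r, |h ^ (2 * l - 1) * (∫ x in c..d, (P l x) ^ 2) -
          h ^ (2 * l - 1) * (∫ x in c..d, (Q l x) ^ 2)| := Finset.abs_sum_le_sum_abs _ _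
    _ ≤ ∑ _l ∈ Finset.Icc 1 r, 4 * A * (M + A) * h ^ (r + 1) := Finset.sum_le_sum key
    _ = r * (4 * A * (M + A) * h ^ (r + 1)) := by
        rw [Finset.sum_const, Nat.card_Icc]; simp [nsmul_eq_mul]
    _ = 4 * A * (M + A) * r * h ^ (r + 1) := by ring
end
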